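/- arXiv:2405.00881 — 14 statements merged into one kernel-verified Lean document; each statement's English description precedes it below -/
import Mathlib

section
/- For every nonnegative integer n, the identity ∑_{k=0}^{n} C(n,k) · k^k · (n-k)^{n-k} = ∑_{k=0}^{n} C(n,k) · n^k · (n-k)! holds (with the convention 0^0 = 1). -/
open Finset

/-- Alternating Pascal transform. -/
lemma alt_pascal (m : ℕ) (g : ℕ → ℤ) :
    ∑ i ∈ Finset.range (m + 2), (-1 : ℤ) ^ i * ((m + 1).choose i) * g i
      = ∑ i ∈ Finset.range (m + 1), (-1 : ℤ) ^ i * (m.choose i) * (g i - g (i + 1)) := by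
  rw [Finset.sum_range_succ' _ (m + 1)]
  have h1 : ∀ i, ((m + 1).choose (i + 1) : ℤ) = (m.choose i : ℤ) + (m.choose (i + 1) : ℤ) := by
    intro i; exact_mod_cast congrArg (Nat.cast (R := ℤ)) (Nat.choose_succ_succ (m) (i))
  have h2 : ∀ i ∈ Finset.range (m + 1), (-1 : ℤ) ^ (i + 1) * ((m + 1).choose (i + 1)) * g (i + 1)
      = -((-1 : ℤ) ^ i * (m.choose i) * g (i + 1))
        - (-1 : ℤ) ^ i * (m.choose (i + 1)) * g (i + 1) := by
    intro i _; rw [h1]; ring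
  rw [Finset.sum_congr rfl h2]
  simp only [mul_sub, Finset.sum_sub_distrib, Finset.sum_neg_distrib]
  have h3 : ∑ i ∈ Finset.range (m + 1), (-1 : ℤ) ^ i * (m.choose (i + 1)) * g (i + 1)
      = ∑ i ∈ Finset.range m, (-1 : ℤ) ^ i * (m.choose (i + 1)) * g (i + 1) := by
    rw [Finset.sum_range_succ, Nat.choose_succ_self]; simp
  have h4 : ∑ i ∈ Finset.range (m + 1), (-1 : ℤ) ^ i * (m.choose i) * g i
      = ∑ i ∈ Finset.range m, (-1 : ℤ) ^ (i + 1) * (m.choose (i + 1)) * g (i + 1)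
        + (-1 : ℤ) ^ 0 * (m.choose 0) * g 0 := Finset.sum_range_succ' _ m
  rw [h3, h4]
  simp only [pow_zero, Nat.choose_zero_right, Nat.cast_one, one_mul, pow_succ,
    Finset.sum_neg_distrib]
  ring_nf
  rw [Finset.sum_neg_distrib]
  ring

lemma pow_sub_pred_pow (r : ℕ) (a : ℤ) :
    a ^ r - (a - 1) ^ r = ∑ s ∈ Finset.range r, (r.choose s : ℤ) * (a - 1) ^ s := by
  have h := add_pow (a - 1) 1 r
  simp only [one_pow, mul_one, sub_add_cancel] at h
  rw [Finset.sum_range_succ] at h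
  rw [h, Nat.choose_self]
  push_cast
  ring_nf

/-- Finite difference of a power. -/
lemma fin_diff_pow : ∀ m : ℕ, ∀ r : ℕ, r ≤ m → ∀ u : ℤ,
    ∑ i ∈ Finset.range (m + 1), (-1 : ℤ) ^ i * (m.choose i) * (u - i) ^ r
      = if r = m then (m.factorial : ℤ) else 0 := by
  intro m
  induction m with
  | zero => intro r hr u; interval_cases r; simp
  | succ m ih =>
    intro r hr u
    rw [show m + 1 + 1 = m + 2 from rfl, alt_pascal m (fun i => (u - i) ^ r)]
    have hg : ∀ i ∈ Finset.range (m + 1), (-1 : ℤ) ^ i * (m.choose i) *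
          ((u - i) ^ r - (u - ((i : ℕ) + 1 : ℕ)) ^ r)
        = ∑ s ∈ Finset.range r, (r.choose s : ℤ) *
            ((-1 : ℤ) ^ i * (m.choose i) * ((u - 1) - i) ^ s) := by
      intro i _
      have h5 : (u : ℤ) - ((i : ℕ) + 1 : ℕ) = (u - i) - 1 := by push_cast; ring
      rw [h5, pow_sub_pred_pow, Finset.mul_sum]
      refine Finset.sum_congr rfl fun s _ => ?_
      have h6 : (u - i) - 1 = (u - 1) - i := by ring
      rw [h6]; ring
    rw [Finset.sum_congr rfl hg, Finset.sum_comm]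
    simp only [← Finset.mul_sum]
    have h7 : ∀ s ∈ Finset.range r, (r.choose s : ℤ) *
          (∑ i ∈ Finset.range (m + 1), (-1 : ℤ) ^ i * (m.choose i) * ((u - 1) - i) ^ s)
        = (r.choose s : ℤ) * (if s = m then (m.factorial : ℤ) else 0) := by
      intro s hs
      rw [ih s (by have := Finset.mem_range.mp hs; omega) (u - 1)]
    rw [Finset.sum_congr rfl h7]
    rcases Nat.lt_or_ge r (m + 1) with hlt | hge
    · rw [if_neg (by omega)]
      refine Finset.sum_eq_zero fun s hs => ?_
      rw [if_neg (by simp at hs; omega), mul_zero]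
    · have hr1 : r = m + 1 := by omega
      subst hr1
      rw [if_pos rfl]
      simp only [mul_ite, mul_zero]
      rw [Finset.sum_ite_eq' (Finset.range (m + 1)) m]
      simp [Nat.choose_succ_self_right, Nat.factorial_succ]

/-- Cauchy's identity over ℤ. -/
lemma cauchy_int (n : ℕ) (x y : ℤ) :
    ∑ k ∈ Finset.range (n + 1),
        (n.choose k : ℤ) * (x + k) ^ k * (y + ((n - k : ℕ) : ℤ)) ^ (n - k)
      = ∑ k ∈ Finset.range (n + 1),
          (n.choose k : ℤ) * ((n - k).factorial : ℤ) * (x + y + n) ^ k := by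
  set z : ℤ := x + y + n with hz
  have stepA : ∀ k ∈ Finset.range (n + 1),
      (n.choose k : ℤ) * (x + k) ^ k * (y + ((n - k : ℕ) : ℤ)) ^ (n - k)
        = ∑ j ∈ Finset.range (n + 1), (n.choose k : ℤ) * (k.choose j : ℤ) *
            (-1 : ℤ) ^ (k - j) * z ^ j * (y + ((n - k : ℕ) : ℤ)) ^ (n - j) := by
    intro k hk
    have hkn : k ≤ n := by simp at hk; omega
    set w : ℤ := y + ((n - k : ℕ) : ℤ) with hw
    have hxz : x + (k : ℤ) = z + (-w) := by
      rw [hw, hz, Nat.cast_sub hkn]; ring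
    have hsub : Finset.range (k + 1) ⊆ Finset.range (n + 1) := by
      intro a ha; simp at ha ⊢; omega
    rw [← Finset.sum_subset hsub (fun j hj hj2 => by
      have hlt : k < j := by simp at hj hj2; omega
      rw [Nat.choose_eq_zero_of_lt hlt]; simp)]
    rw [hxz, add_pow, Finset.mul_sum, Finset.sum_mul]
    refine Finset.sum_congr rfl fun j hj => ?_
    have hjk : j ≤ k := by simp at hj; omega
    have he : (k - j) + (n - k) = n - j := by omega
    rw [neg_pow, show w ^ (n - j) = w ^ (k - j) * w ^ (n - k) by rw [← pow_add, he]]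
    ring
  rw [Finset.sum_congr rfl stepA, Finset.sum_comm]
  refine Finset.sum_congr rfl fun j hj => ?_
  have hjn : j ≤ n := by simp at hj; omega
  have key := fin_diff_pow (n - j) (n - j) le_rfl (y + ((n - j : ℕ) : ℤ))
  rw [if_pos rfl] at key
  have hsub2 : Finset.Ico j (n + 1) ⊆ Finset.range (n + 1) := by
    intro a ha; simp at ha ⊢; omega
  rw [← Finset.sum_subset hsub2 (fun k hk hk2 => by
    have hlt : k < j := by simp at hk hk2; omega
    rw [Nat.choose_eq_zero_of_lt hlt]; push_cast; ring)]
  rw [Finset.sum_Ico_eq_sum_range]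
  have hrange : n + 1 - j = (n - j) + 1 := by omega
  rw [hrange]
  have stepC : ∀ i ∈ Finset.range ((n - j) + 1),
      (n.choose (j + i) : ℤ) * ((j + i).choose j : ℤ) * (-1 : ℤ) ^ ((j + i) - j) * z ^ j *
          (y + ((n - (j + i) : ℕ) : ℤ)) ^ (n - j)
        = (n.choose j : ℤ) * z ^ j *
            ((-1 : ℤ) ^ i * (((n - j).choose i : ℕ) : ℤ) *
              ((y + ((n - j : ℕ) : ℤ)) - i) ^ (n - j)) := by
    intro i hi
    have hin : j + i ≤ n := by simp at hi; omega
    have hcm : (n.choose (j + i)) * ((j + i).choose j) = n.choose j * (n - j).choose i := by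
      rw [Nat.choose_mul (n := n) (Nat.le_add_right j i), Nat.add_sub_cancel_left]
    have hc : (n.choose (j + i) : ℤ) * ((j + i).choose j : ℤ)
        = (n.choose j : ℤ) * (((n - j).choose i : ℕ) : ℤ) := by exact_mod_cast hcm
    have hidx : (j + i) - j = i := by omega
    have hcast : (((n - (j + i) : ℕ)) : ℤ) = (((n - j : ℕ)) : ℤ) - i := by
      rw [Nat.cast_sub hin, Nat.cast_sub hjn]; push_cast; ring
    rw [hidx, hcast]
    have harg : y + ((((n - j : ℕ)) : ℤ) - i) = (y + ((n - j : ℕ) : ℤ)) - i := by ring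
    rw [harg]
    linear_combination ((-1 : ℤ) ^ i * z ^ j * ((y + ((n - j : ℕ) : ℤ)) - i) ^ (n - j)) * hc
  rw [Finset.sum_congr rfl stepC, ← Finset.mul_sum, key]
  ring

/-- Cauchy's Abel-type identity:
`∑_{k=0}^n C(n,k) k^k (n-k)^{n-k} = ∑_{k=0}^n C(n,k) n^k (n-k)!`. -/
theorem cauchy_abel_identity (n : ℕ) :
    ∑ k ∈ Finset.range (n + 1), n.choose k * k ^ k * (n - k) ^ (n - k) =
      ∑ k ∈ Finset.range (n + 1), n.choose k * n ^ k * (n - k).factorial := by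
  have h := cauchy_int n 0 0
  simp only [zero_add, add_zero] at h
  have : ((∑ k ∈ Finset.range (n + 1), n.choose k * k ^ k * (n - k) ^ (n - k) : ℕ) : ℤ)
      = ((∑ k ∈ Finset.range (n + 1), n.choose k * n ^ k * (n - k).factorial : ℕ) : ℤ) := by
    push_cast
    rw [h]
    exact Finset.sum_congr rfl fun k _ => by ring
  exact_mod_cast this
end

section
/- For all nonnegative integers n and p, ∑_{k=0}^{n} C(n,k) · k^k · (n-k)^{n-k+p} = ∑_{k=0}^{n} C(n,k) · n^k · Surj(p+n-k, n-k), where Surj(a,b) denotes the number of surjective functions from a set of size a onto a set of size b. -/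
open Finset

/-- The number of surjective functions from a set of size `a` onto a set of size `b`
(equal to `b! · S(a,b)` where `S` is the Stirling number of the second kind). -/
def surjCount (a b : ℕ) : ℕ :=
  Fintype.card {f : Fin a → Fin b // Function.Surjective f}

lemma surjCount_cast_eq (a b : ℕ) :
    ((surjCount a b : ℕ) : ℤ) =
      ∑ j ∈ Finset.range (b + 1), (-1 : ℤ) ^ j * (b.choose j) * ((b - j : ℕ) : ℤ) ^ a := by
  rw [surjCount]
  classical
  have hcard : Fintype.card {f : Fin a → Fin b // Function.Surjective f}
      = (Finset.univ.filter (fun f : Fin a → Fin b => Function.Surjective f)).card :=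
    Fintype.card_subtype _
  calc (Fintype.card {f : Fin a → Fin b // Function.Surjective f} : ℤ)
      = ∑ f : Fin a → Fin b, if Function.Surjective f then (1 : ℤ) else 0 := by
        rw [hcard, Finset.card_filter]
        push_cast [apply_ite (Nat.cast : ℕ → ℤ)]
        rfl
    _ = ∑ f : Fin a → Fin b,
          ∑ S ∈ (Finset.univ \ Finset.image f Finset.univ).powerset, (-1 : ℤ) ^ S.card := by
        refine Finset.sum_congr rfl fun f _ => ?_
        rw [Finset.sum_powerset_neg_one_pow_card]
        have h : Function.Surjective f ↔ Finset.univ \ Finset.image f Finset.univ = ∅ := by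
          rw [Finset.sdiff_eq_empty_iff_subset]
          constructor
          · intro h
            intro x _
            obtain ⟨y, hy⟩ := h x
            exact Finset.mem_image.2 ⟨y, Finset.mem_univ _, hy⟩
          · intro h x
            obtain ⟨y, _, hy⟩ := Finset.mem_image.1 (h (Finset.mem_univ x))
            exact ⟨y, hy⟩
        simp only [h]
    _ = ∑ f : Fin a → Fin b, ∑ S ∈ (Finset.univ : Finset (Fin b)).powerset,
          if S ⊆ Finset.univ \ Finset.image f Finset.univ then (-1 : ℤ) ^ S.card else 0 := by
        refine Finset.sum_congr rfl fun f _ => ?_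
        have hp : (Finset.univ \ Finset.image f Finset.univ).powerset
            = (Finset.univ : Finset (Fin b)).powerset.filter
              (fun S => S ⊆ Finset.univ \ Finset.image f Finset.univ) := by
          ext S
          simp
        rw [hp, Finset.sum_filter]
    _ = ∑ S ∈ (Finset.univ : Finset (Fin b)).powerset, ∑ f : Fin a → Fin b,
          if S ⊆ Finset.univ \ Finset.image f Finset.univ then (-1 : ℤ) ^ S.card else 0 :=
        Finset.sum_comm
    _ = ∑ S ∈ (Finset.univ : Finset (Fin b)).powerset,
          (-1 : ℤ) ^ S.card * ((b - S.card : ℕ) : ℤ) ^ a := by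
        refine Finset.sum_congr rfl fun S _ => ?_
        rw [← Finset.sum_filter]
        have hfil : (Finset.univ.filter
            (fun f : Fin a → Fin b => S ⊆ Finset.univ \ Finset.image f Finset.univ))
            = Fintype.piFinset (fun _ : Fin a => Sᶜ) := by
          ext f
          simp only [Finset.mem_filter, Finset.mem_univ, true_and, Fintype.mem_piFinset,
            Finset.mem_compl, Finset.subset_iff, Finset.mem_sdiff, Finset.mem_image]
          constructor
          · intro h i hi
            exact h hi ⟨i, rfl⟩
          · intro h x hx
            exact fun ⟨i, hfi⟩ => h i (hfi ▸ hx)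
        rw [hfil, Finset.sum_const, Fintype.card_piFinset]
        simp [Finset.card_compl, mul_comm]
    _ = ∑ j ∈ Finset.range (b + 1), (-1 : ℤ) ^ j * (b.choose j) * ((b - j : ℕ) : ℤ) ^ a := by
        rw [Finset.sum_powerset_apply_card (f := fun j => (-1 : ℤ) ^ j * ((b - j : ℕ) : ℤ) ^ a)]
        simp only [Finset.card_univ, Fintype.card_fin, nsmul_eq_mul]
        refine Finset.sum_congr rfl fun j _ => ?_
        ring

/-- Kalai's Abel-type identity:
`∑_{k=0}^n C(n,k) k^k (n-k)^{n-k+p} = ∑_{k=0}^n C(n,k) n^k Surj(p+n-k, n-k)`. -/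
theorem kalai_abel_identity (n p : ℕ) :
    ∑ k ∈ Finset.range (n + 1), n.choose k * k ^ k * (n - k) ^ (n - k + p) =
      ∑ k ∈ Finset.range (n + 1), n.choose k * n ^ k * surjCount (p + n - k) (n - k) := by
  have hZ : ((∑ k ∈ Finset.range (n + 1), n.choose k * k ^ k * (n - k) ^ (n - k + p) : ℕ) : ℤ)
      = ((∑ k ∈ Finset.range (n + 1),
            n.choose k * n ^ k * surjCount (p + n - k) (n - k) : ℕ) : ℤ) := by
    push_cast
    set F : ℕ → ℕ → ℤ := fun k j => (-1 : ℤ) ^ j * (n.choose k : ℤ) * ((n - k).choose j : ℤ) *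
      (n : ℤ) ^ k * ((n - k - j : ℕ) : ℤ) ^ (p + n - k) with hF
    have hR : ∑ k ∈ range (n + 1), (n.choose k : ℤ) * (n : ℤ) ^ k *
          (surjCount (p + n - k) (n - k) : ℤ)
        = ∑ k ∈ range (n + 1), ∑ j ∈ range (n - k + 1), F k j := by
      refine Finset.sum_congr rfl fun k _ => ?_
      rw [show (surjCount (p + n - k) (n - k) : ℤ) =
          ∑ j ∈ Finset.range (n - k + 1), (-1 : ℤ) ^ j * ((n - k).choose j) *
            ((n - k - j : ℕ) : ℤ) ^ (p + n - k) from surjCount_cast_eq (p + n - k) (n - k),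
        Finset.mul_sum]
      refine Finset.sum_congr rfl fun j _ => ?_
      simp only [hF]
      ring
    have hL : ∑ m ∈ range (n + 1), (n.choose m : ℤ) * (m : ℤ) ^ m *
          ((n - m : ℕ) : ℤ) ^ (n - m + p)
        = ∑ m ∈ range (n + 1), ∑ k ∈ range (m + 1), F k (m - k) := by
      refine Finset.sum_congr rfl fun m hm => ?_
      rw [Finset.mem_range, Nat.lt_succ_iff] at hm
      have hcast : ((m : ℕ) : ℤ) = (n : ℤ) - ((n - m : ℕ) : ℤ) := by
        rw [Nat.cast_sub hm]; ring
      rw [hcast, sub_pow, Finset.mul_sum, Finset.sum_mul]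
      refine Finset.sum_congr rfl fun k hk => ?_
      rw [Finset.mem_range, Nat.lt_succ_iff] at hk
      have h1 : n - k - (m - k) = n - m := by omega
      have h2 : p + n - k = (m - k) + (n - m + p) := by omega
      have h3 : (-1 : ℤ) ^ k * (-1 : ℤ) ^ m = (-1 : ℤ) ^ (m - k) := by
        rw [← pow_add, show k + m = (m - k) + 2 * k from by omega, pow_add, pow_mul,
          neg_one_sq, one_pow, mul_one]
      have h5 : ((n - m : ℕ) : ℤ) ^ (p + n - k)
          = ((n - m : ℕ) : ℤ) ^ (m - k) * ((n - m : ℕ) : ℤ) ^ (n - m + p) := by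
        rw [h2, pow_add]
      have h4 : ((n.choose m : ℕ) : ℤ) * ((m.choose k : ℕ) : ℤ)
          = ((n.choose k : ℕ) : ℤ) * (((n - k).choose (m - k) : ℕ) : ℤ) := by
        exact_mod_cast congrArg (Nat.cast : ℕ → ℤ) (Nat.choose_mul (n := n) hk)
      simp only [hF]
      rw [h1]
      linear_combination ((n.choose m : ℤ) * (m.choose k : ℤ) * (n : ℤ) ^ k *
          ((n - m : ℕ) : ℤ) ^ (m - k) * ((n - m : ℕ) : ℤ) ^ (n - m + p)) * h3
        + ((-1 : ℤ) ^ (m - k) * (n : ℤ) ^ k * ((n - m : ℕ) : ℤ) ^ (m - k) *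
          ((n - m : ℕ) : ℤ) ^ (n - m + p)) * h4
        - ((-1 : ℤ) ^ (m - k) * (n.choose k : ℤ) * ((n - k).choose (m - k) : ℤ) *
          (n : ℤ) ^ k) * h5
    have hB : ∑ k ∈ range (n + 1), ∑ j ∈ range (n - k + 1), F k j
        = ∑ m ∈ range (n + 1), ∑ k ∈ range (m + 1), F k (m - k) := by
      rw [Finset.sum_sigma', Finset.sum_sigma']
      refine Finset.sum_nbij' (fun x => ⟨x.1 + x.2, x.1⟩) (fun x => ⟨x.2, x.1 - x.2⟩)
        ?_ ?_ ?_ ?_ ?_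
      · rintro ⟨k, j⟩ hx
        simp only [Finset.mem_sigma, Finset.mem_range] at hx ⊢
        omega
      · rintro ⟨m, k⟩ hx
        simp only [Finset.mem_sigma, Finset.mem_range] at hx ⊢
        omega
      · rintro ⟨k, j⟩ _
        simp
      · rintro ⟨m, k⟩ hx
        simp only [Finset.mem_sigma, Finset.mem_range] at hx
        have hkm : k + (m - k) = m := by omega
        simp [hkm]
      · rintro ⟨k, j⟩ _
        simp
    rw [hL, hR, hB]
  exact_mod_cast hZ
end

section
/- For every nonnegative integer n, the number of pairs (f, D), where f is a function from Fin n to Fin n and D is a subset of Fin n such that the image f(D) equals D, is ∑_{k=0}^{n} C(n,k) · n^k · (n-k)!. -/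
noncomputable def fixEquiv (n : ℕ) (D : Finset (Fin n)) :
    {f : Fin n → Fin n // D.image f = D} ≃
      (Equiv.Perm ↥D) × ({x : Fin n // x ∉ D} → Fin n) where
  toFun := fun ⟨f, hf⟩ =>
    ⟨Equiv.ofBijective (fun x : ↥D =>
        (⟨f x, by have h := Finset.mem_image_of_mem f x.2; rwa [hf] at h⟩ : ↥D))
      (Finite.injective_iff_bijective.1 (fun a b hab => by
        have hinj : Set.InjOn f D := Finset.injOn_of_card_image_eq (by rw [hf])
        exact Subtype.ext (hinj a.2 b.2 (congrArg Subtype.val hab)))),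
      fun x => f x.1⟩
  invFun := fun ⟨g, h⟩ =>
    ⟨fun x => if hx : x ∈ D then (g ⟨x, hx⟩ : Fin n) else h ⟨x, hx⟩, by
      apply subset_antisymm
      · intro y hy
        obtain ⟨x, hx, rfl⟩ := Finset.mem_image.1 hy
        simp only [hx, dif_pos]
        exact (g ⟨x, hx⟩).2
      · intro y hy
        refine Finset.mem_image.2 ⟨(g.symm ⟨y, hy⟩ : Fin n), (g.symm ⟨y, hy⟩).2, ?_⟩
        simp only [(g.symm ⟨y, hy⟩).2, dif_pos, Subtype.coe_eta, Equiv.apply_symm_apply]⟩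
  left_inv := fun ⟨f, hf⟩ => by
    ext x
    simp only
    split_ifs <;> rfl
  right_inv := fun ⟨g, h⟩ => by
    refine Prod.ext (Equiv.ext fun x => Subtype.ext ?_) (funext fun x => ?_)
    · simp only [Equiv.ofBijective_apply, x.2, dif_pos, Subtype.coe_eta]
    · simp only [x.2, dif_neg, not_false_iff]

theorem card_fix (n : ℕ) (D : Finset (Fin n)) :
    Fintype.card {f : Fin n → Fin n // D.image f = D} =
      (D.card).factorial * n ^ (n - D.card) := by
  rw [Fintype.card_congr (fixEquiv n D)]
  simp [Fintype.card_perm, Fintype.card_fun, Fintype.card_subtype_compl,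
    Fintype.card_coe]

/-- The number of pairs `(f, D)` with `f : Fin n → Fin n` and `D ⊆ Fin n` such that
`f(D) = D` equals `∑_{k=0}^n C(n,k) n^k (n-k)!`. -/
theorem count_pairs_image_eq (n : ℕ) :
    Fintype.card {fD : (Fin n → Fin n) × Finset (Fin n) //
        fD.2.image fD.1 = fD.2} =
      ∑ k ∈ Finset.range (n + 1), n.choose k * n ^ k * (n - k).factorial := by
  have e : {fD : (Fin n → Fin n) × Finset (Fin n) // fD.2.image fD.1 = fD.2} ≃
      Σ D : Finset (Fin n), {f : Fin n → Fin n // D.image f = D} :=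
    ((Equiv.prodComm (Fin n → Fin n) (Finset (Fin n))).subtypeEquiv
        (p := fun fD => fD.2.image fD.1 = fD.2)
        (q := fun x => x.1.image x.2 = x.1) (fun x => Iff.rfl)).trans
      (Equiv.subtypeProdEquivSigmaSubtype fun (D : Finset (Fin n)) (f : Fin n → Fin n) => D.image f = D)
  rw [Fintype.card_congr e, Fintype.card_sigma]
  calc ∑ D : Finset (Fin n), Fintype.card {f : Fin n → Fin n // D.image f = D}
      = ∑ D ∈ (Finset.univ : Finset (Fin n)).powerset,
          (D.card).factorial * n ^ (n - D.card) := by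
        rw [Finset.powerset_univ]
        exact Finset.sum_congr rfl fun D _ => card_fix n D
    _ = ∑ m ∈ Finset.range ((Finset.univ : Finset (Fin n)).card + 1),
          ((Finset.univ : Finset (Fin n)).card).choose m •
            (m.factorial * n ^ (n - m)) :=
        Finset.sum_powerset_apply_card (fun k => k.factorial * n ^ (n - k))
    _ = ∑ m ∈ Finset.range (n + 1), n.choose m * (m.factorial * n ^ (n - m)) := by
        simp [Finset.card_univ]
    _ = ∑ k ∈ Finset.range (n + 1), n.choose k * n ^ k * (n - k).factorial := by
        rw [← Finset.sum_range_reflect]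
        refine Finset.sum_congr rfl fun j hj => ?_
        have hjn : j ≤ n := Nat.lt_succ_iff.1 (Finset.mem_range.1 hj)
        rw [Nat.add_sub_cancel, Nat.choose_symm hjn,
          Nat.sub_sub_self hjn]
        ring
end

section
/- For every nonnegative integer n and every function f from Fin n to Fin n, the number of subsets A of Fin n satisfying f(A) ⊆ A and f(Aᶜ) ⊆ Aᶜ equals the number of subsets D of Fin n satisfying f(D) = D. -/
open Function Finset

section aux
variable {n : ℕ} (f : Fin n → Fin n)

private lemma per_apply {x : Fin n} (h : x ∈ periodicPts f) : f x ∈ periodicPts f := by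
  obtain ⟨k, hk, hx⟩ := h
  exact ⟨k, hk, by
    show f^[k] (f x) = f x
    rw [← Function.iterate_succ_apply, Function.iterate_succ_apply', hx]⟩

private lemma per_iterate {x : Fin n} (h : x ∈ periodicPts f) (m : ℕ) :
    f^[m] x ∈ periodicPts f := by
  induction m with
  | zero => exact h
  | succ m ih => rw [Function.iterate_succ_apply']; exact per_apply f ih

private lemma per_pow (x : Fin n) : f^[n] x ∈ periodicPts f := by
  have hlt : Fintype.card (Fin n) < Fintype.card (Fin (n+1)) := by simp
  obtain ⟨i, j, hij, heq⟩ := Fintype.exists_ne_map_eq_of_card_lt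
    (fun i : Fin (n+1) => f^[(i : ℕ)] x) hlt
  wlog hlt2 : (i : ℕ) < (j : ℕ) generalizing i j
  · have hne : (i : ℕ) ≠ (j : ℕ) := fun h => hij (Fin.ext h)
    exact this j i hij.symm heq.symm (by omega)
  · have hper : f^[(i:ℕ)] x ∈ periodicPts f := by
      refine ⟨(j:ℕ) - (i:ℕ), by omega, ?_⟩
      show f^[(j:ℕ)-(i:ℕ)] (f^[(i:ℕ)] x) = f^[(i:ℕ)] x
      rw [← Function.iterate_add_apply, Nat.sub_add_cancel (le_of_lt hlt2)]
      exact heq.symm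
    have : f^[n] x = f^[n - (i:ℕ)] (f^[(i:ℕ)] x) := by
      rw [← Function.iterate_add_apply]
      congr 1
      omega
    rw [this]
    exact per_iterate f hper _

private lemma per_inj {x y : Fin n} (hx : x ∈ periodicPts f) (hy : y ∈ periodicPts f)
    (h : f x = f y) : x = y := by
  obtain ⟨k, hk, hxx⟩ := hx
  obtain ⟨m, hm, hyy⟩ := hy
  have hxkm : f^[k*m] x = x := hxx.mul_const m
  have hykm : f^[k*m] y = y := hyy.const_mul k
  have hpos : 0 < k*m := Nat.mul_pos hk hm
  calc x = f^[k*m] x := hxkm.symm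
    _ = f^[(k*m-1)+1] x := by rw [Nat.sub_add_cancel hpos]
    _ = f^[k*m-1] (f x) := Function.iterate_succ_apply ..
    _ = f^[k*m-1] (f y) := by rw [h]
    _ = f^[(k*m-1)+1] y := (Function.iterate_succ_apply ..).symm
    _ = f^[k*m] y := by rw [Nat.sub_add_cancel hpos]
    _ = y := hykm

end aux

section aux2
variable {n : ℕ} {f : Fin n → Fin n}

private lemma inv_iterate {A : Finset (Fin n)} (hA : A.image f ⊆ A) {x : Fin n}
    (hx : x ∈ A) (m : ℕ) : f^[m] x ∈ A := by
  induction m with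
  | zero => exact hx
  | succ m ih => rw [Function.iterate_succ_apply']; exact hA (mem_image_of_mem f ih)

private lemma fixed_mem_per {D : Finset (Fin n)} (hD : D.image f = D) {x : Fin n}
    (hx : x ∈ D) : x ∈ periodicPts f := by
  have hinj : Set.InjOn f D := Finset.injOn_of_card_image_eq (by rw [hD])
  have hiter : ∀ m, f^[m] x ∈ D := inv_iterate hD.le hx
  have cancel : ∀ i d, f^[i] x = f^[i+d] x → x = f^[d] x := by
    intro i
    induction i with
    | zero => intro d h; simpa using h
    | succ i ih =>
      intro d h
      apply ih
      have h1 : f (f^[i] x) = f (f^[i+d] x) := by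
        calc f (f^[i] x) = f^[i+1] x := (Function.iterate_succ_apply' ..).symm
          _ = f^[i+1+d] x := h
          _ = f^[i+d+1] x := by rw [show i+1+d = i+d+1 by omega]
          _ = f (f^[i+d] x) := Function.iterate_succ_apply' ..
      exact hinj (hiter i) (hiter (i+d)) h1
  have hlt : Fintype.card (Fin n) < Fintype.card (Fin (n+1)) := by simp
  obtain ⟨i, j, hij, heq⟩ := Fintype.exists_ne_map_eq_of_card_lt
    (fun i : Fin (n+1) => f^[(i : ℕ)] x) hlt
  wlog hlt2 : (i : ℕ) < (j : ℕ) generalizing i j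
  · have hne : (i : ℕ) ≠ (j : ℕ) := fun h => hij (Fin.ext h)
    exact this j i hij.symm heq.symm (by omega)
  · refine ⟨(j:ℕ) - (i:ℕ), by omega, ?_⟩
    show f^[(j:ℕ)-(i:ℕ)] x = x
    refine (cancel (i:ℕ) ((j:ℕ)-(i:ℕ)) ?_).symm
    have : (i:ℕ) + ((j:ℕ) - (i:ℕ)) = (j:ℕ) := by omega
    rw [this]; exact heq

private lemma mem_iff_apply_mem {D : Finset (Fin n)} (hD : D.image f = D) {x : Fin n}
    (hx : x ∈ periodicPts f) : f x ∈ D ↔ x ∈ D := by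
  constructor
  · intro h
    rw [← hD] at h
    obtain ⟨y, hy, hyx⟩ := Finset.mem_image.mp h
    exact per_inj f (fixed_mem_per hD hy) hx hyx ▸ hy
  · intro h; exact hD ▸ mem_image_of_mem f h

private lemma mem_iff_iterate_mem {D : Finset (Fin n)} (hD : D.image f = D) {x : Fin n}
    (hx : x ∈ periodicPts f) (m : ℕ) : f^[m] x ∈ D ↔ x ∈ D := by
  induction m with
  | zero => exact Iff.rfl
  | succ m ih =>
    rw [Function.iterate_succ_apply']
    rw [mem_iff_apply_mem hD (per_iterate f hx m)]
    exact ih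

end aux2

/-- For every `f : Fin n → Fin n`, the number of subsets `A` with `f(A) ⊆ A` and
`f(Aᶜ) ⊆ Aᶜ` equals the number of subsets `D` with `f(D) = D`. -/
theorem card_invariant_pairs_eq_card_fixed_sets (n : ℕ) (f : Fin n → Fin n) :
    Fintype.card {A : Finset (Fin n) // A.image f ⊆ A ∧ Aᶜ.image f ⊆ Aᶜ} =
      Fintype.card {D : Finset (Fin n) // D.image f = D} := by
  classical
  refine Fintype.card_congr ⟨fun A => ⟨A.1.filter (· ∈ periodicPts f), ?_⟩,
    fun D => ⟨univ.filter (fun x => f^[n] x ∈ D.1), ?_, ?_⟩, ?_, ?_⟩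
  · -- image of filtered set equals itself
    obtain ⟨A, hA1, hA2⟩ := A
    ext y
    simp only [Finset.mem_image, Finset.mem_filter]
    constructor
    · rintro ⟨x, ⟨hxA, hxP⟩, rfl⟩
      exact ⟨hA1 (mem_image_of_mem f hxA), per_apply f hxP⟩
    · rintro ⟨hyA, hyP⟩
      obtain ⟨k, hk, hky⟩ := hyP
      refine ⟨f^[k-1] y, ⟨inv_iterate hA1 hyA _, per_iterate f ⟨k, hk, hky⟩ _⟩, ?_⟩
      calc f (f^[k-1] y) = f^[k-1+1] y := (Function.iterate_succ_apply' ..).symm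
        _ = f^[k] y := by rw [Nat.sub_add_cancel hk]
        _ = y := hky
  · -- forward invariance of preimage set
    intro y hy
    obtain ⟨x, hx, rfl⟩ := Finset.mem_image.mp hy
    simp only [Finset.mem_filter, Finset.mem_univ, true_and] at hx ⊢
    rw [← Function.iterate_succ_apply, Function.iterate_succ_apply',
      mem_iff_apply_mem D.2 (per_pow f x)]
    exact hx
  · -- complement invariance
    intro y hy
    obtain ⟨x, hx, rfl⟩ := Finset.mem_image.mp hy
    simp only [Finset.mem_compl, Finset.mem_filter, Finset.mem_univ, true_and] at hx ⊢
    rw [← Function.iterate_succ_apply, Function.iterate_succ_apply',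
      mem_iff_apply_mem D.2 (per_pow f x)]
    exact hx
  · -- left inverse
    rintro ⟨A, hA1, hA2⟩
    apply Subtype.ext
    ext x
    simp only [Finset.mem_filter, Finset.mem_univ, true_and]
    constructor
    · rintro ⟨hx, -⟩
      by_contra hxA
      have : f^[n] x ∈ Aᶜ := inv_iterate hA2 (Finset.mem_compl.mpr hxA) n
      exact Finset.mem_compl.mp this hx
    · intro hx
      exact ⟨inv_iterate hA1 hx n, per_pow f x⟩
  · -- right inverse
    rintro ⟨D, hD⟩
    apply Subtype.ext
    ext x
    simp only [Finset.mem_filter, Finset.mem_univ, true_and]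
    constructor
    · rintro ⟨hx, hxP⟩
      exact (mem_iff_iterate_mem hD hxP n).mp hx
    · intro hx
      exact ⟨(mem_iff_iterate_mem hD (fixed_mem_per hD hx) n).mpr hx, fixed_mem_per hD hx⟩
end

section
/- Let n and p be nonnegative integers and let f : ℕ → ℕ be a function satisfying f(i) < n for all i < n+p. Then the number of subsets A of {0,1,…,n-1} such that f(a) ∈ A for all a ∈ A and f(b) ∉ A for all b ∈ ({0,…,n-1} \ A) ∪ {n, n+1, …, n+p-1} equals the number of subsets D of {0,1,…,n-1} such that the image of D ∪ {n, n+1, …, n+p-1} under f equals D. -/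
open Finset Function

namespace KalaiAux

variable {n p : ℕ} {f : ℕ → ℕ}

/-- The map `X ↦ f(X ∪ [n, n+p))`. -/
def gg (n p : ℕ) (f : ℕ → ℕ) (X : Finset ℕ) : Finset ℕ :=
  (X ∪ Finset.Ico n (n + p)).image f

lemma gg_mono : Monotone (gg n p f) := fun _ _ h =>
  image_subset_image (union_subset_union_left h)

lemma mem_gg_of_mem {X : Finset ℕ} {y : ℕ} (hy : y ∈ X) : f y ∈ gg n p f X :=
  mem_image_of_mem f (mem_union_left _ hy)

lemma mem_gg_of_mem_Ico {X : Finset ℕ} {y : ℕ} (hy : y ∈ Finset.Ico n (n + p)) :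
    f y ∈ gg n p f X := mem_image_of_mem f (mem_union_right _ hy)

lemma iter_lt (hf : ∀ i < n + p, f i < n) {x : ℕ} (hx : x < n) (k : ℕ) : f^[k] x < n := by
  induction k with
  | zero => simpa
  | succ k ih =>
    rw [Function.iterate_succ_apply']
    exact hf _ (lt_of_lt_of_le ih (Nat.le_add_right n p))

lemma closed_iter {D : Finset ℕ} (hD : ∀ x ∈ D, f x ∈ D) {x : ℕ} (hx : x ∈ D) (k : ℕ) :
    f^[k] x ∈ D := by
  induction k with
  | zero => simpa
  | succ k ih => rw [Function.iterate_succ_apply']; exact hD _ ih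

/-- If some iterate of `x` lands in the `f`-closed set `D ⊆ [n]`, then already the
`n`-th iterate is in `D`. -/
lemma witness_le (hf : ∀ i < n + p, f i < n) {D : Finset ℕ} (hD : ∀ x ∈ D, f x ∈ D)
    {x : ℕ} (hx : x < n) (h : ∃ k, f^[k] x ∈ D) : f^[n] x ∈ D := by
  classical
  have hk : f^[Nat.find h] x ∈ D := Nat.find_spec h
  have key : ∀ i j : ℕ, i < j → j ≤ n → f^[i] x = f^[j] x → n < Nat.find h → False := by
    intro i j hij hjn heq hn
    have h1 : f^[(Nat.find h - j) + i] x ∈ D := by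
      rw [Function.iterate_add_apply, heq, ← Function.iterate_add_apply]
      have hh : Nat.find h - j + j = Nat.find h := by omega
      rw [hh]; exact hk
    exact Nat.find_min h (by omega) h1
  have hkn : Nat.find h ≤ n := by
    by_contra hlt
    push_neg at hlt
    obtain ⟨i, hi, j, hj, hij, heq⟩ :=
      Finset.exists_ne_map_eq_of_card_lt_of_maps_to (s := Finset.range (n + 1))
        (t := Finset.range n) (by simp)
        (fun a _ => Finset.mem_range.2 (iter_lt hf hx a))
    rcases Nat.lt_or_ge i j with h' | h'
    · exact key i j h' (Nat.lt_succ_iff.mp (mem_range.mp hj)) heq hlt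
    · exact key j i (lt_of_le_of_ne h' (Ne.symm hij)) (Nat.lt_succ_iff.mp (mem_range.mp hi))
        heq.symm hlt
  have hsplit : f^[n] x = f^[n - Nat.find h] (f^[Nat.find h] x) := by
    rw [← Function.iterate_add_apply]
    congr 1; omega
  rw [hsplit]
  exact closed_iter hD hk _

lemma iter_gg_subset {B : Finset ℕ} (hB : gg n p f B ⊆ B) : ∀ k, (gg n p f)^[k] B ⊆ B := by
  intro k
  induction k with
  | zero => simp
  | succ k ih =>
    rw [Function.iterate_succ_apply']
    exact (gg_mono ih).trans hB

lemma iter_mem_iter {B : Finset ℕ} {b : ℕ} (hb : b ∈ B) (k : ℕ) :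
    f^[k] b ∈ (gg n p f)^[k] B := by
  induction k with
  | zero => simpa
  | succ k ih =>
    simp only [Function.iterate_succ_apply']
    exact mem_gg_of_mem ih

lemma gg_fix {B : Finset ℕ} (hB : gg n p f B ⊆ B) (hcard : B.card ≤ n) :
    gg n p f ((gg n p f)^[n] B) = (gg n p f)^[n] B := by
  have hchain : ∀ k, (gg n p f)^[k + 1] B ⊆ (gg n p f)^[k] B := by
    intro k
    rw [Function.iterate_succ_apply]
    exact gg_mono.iterate k hB
  have hstab : ∀ k, (gg n p f)^[k + 1] B = (gg n p f)^[k] B →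
      ∀ m, k ≤ m → (gg n p f)^[m] B = (gg n p f)^[k] B := by
    intro k hk m hm
    induction m, hm using Nat.le_induction with
    | base => rfl
    | succ m hm ih =>
      rw [Function.iterate_succ_apply', ih, ← Function.iterate_succ_apply' (gg n p f) k, hk]
  have hex : ∃ k ≤ n, (gg n p f)^[k + 1] B = (gg n p f)^[k] B := by
    by_contra hne
    push_neg at hne
    have hdec : ∀ k ≤ n + 1, ((gg n p f)^[k] B).card + k ≤ B.card := by
      intro k hk
      induction k with
      | zero => simp
      | succ k ih =>
        have h1 := ih (by omega)
        have h2 : (gg n p f)^[k + 1] B ⊂ (gg n p f)^[k] B :=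
          (Finset.ssubset_iff_subset_ne).2 ⟨hchain k, hne k (by omega)⟩
        have h3 := Finset.card_lt_card h2
        omega
    have := hdec (n + 1) le_rfl
    omega
  obtain ⟨k, hk, hfix⟩ := hex
  have h1 := hstab k hfix n hk
  have h2 := hstab k hfix (n + 1) (by omega)
  rw [← Function.iterate_succ_apply' (gg n p f) n, h1, ← h2]

open Classical in
/-- Elements of `[n]` from which some iterate of `f` reaches `D`. -/
noncomputable def reach (n : ℕ) (f : ℕ → ℕ) (D : Finset ℕ) : Finset ℕ :=
  (Finset.range n).filter (fun x => ∃ k, f^[k] x ∈ D)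

lemma mem_reach {D : Finset ℕ} {x : ℕ} :
    x ∈ reach n f D ↔ x < n ∧ ∃ k, f^[k] x ∈ D := by
  classical
  simp [reach, Finset.mem_filter, Finset.mem_range]

lemma gg_iter_mem {D X : Finset ℕ} (hDf : ∀ x ∈ D, f x ∈ D)
    (hDT : ∀ t ∈ Finset.Ico n (n + p), f t ∈ D) :
    ∀ m x, x ∈ (gg n p f)^[m] X → x ∈ D ∨ ∃ c ∈ X, x = f^[m] c := by
  intro m
  induction m with
  | zero => intro x hx; exact Or.inr ⟨x, by simpa using hx, rfl⟩
  | succ m ih =>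
    intro x hx
    rw [Function.iterate_succ_apply'] at hx
    obtain ⟨y, hy, rfl⟩ := Finset.mem_image.mp hx
    rcases Finset.mem_union.mp hy with hy | hy
    · rcases ih y hy with h | ⟨c, hc, rfl⟩
      · exact Or.inl (hDf _ h)
      · exact Or.inr ⟨c, hc, (Function.iterate_succ_apply' f m c).symm⟩
    · exact Or.inl (hDT _ hy)

lemma gg_iter_fix {D : Finset ℕ} (hD : gg n p f D = D) (k : ℕ) : (gg n p f)^[k] D = D := by
  induction k with
  | zero => rfl
  | succ k ih => rw [Function.iterate_succ_apply', ih, hD]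

end KalaiAux

open KalaiAux Finset Function in
/-- The strengthened bijective statement used to prove Kalai's identity: for any
`f : ℕ → ℕ` mapping `[n+p] = {0,…,n+p-1}` into `[n] = {0,…,n-1}`, the number of
subsets `A ⊆ [n]` with `f(A) ⊆ A` and `f(([n] \ A) ∪ {n,…,n+p-1}) ∩ A = ∅`
equals the number of subsets `D ⊆ [n]` with `f(D ∪ {n,…,n+p-1}) = D`. -/
theorem card_eq_of_partition_conditions (n p : ℕ) (f : ℕ → ℕ)
    (hf : ∀ i < n + p, f i < n) :
    ((Finset.range n).powerset.filter (fun A =>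
        (∀ a ∈ A, f a ∈ A) ∧
        ∀ b ∈ (Finset.range n \ A) ∪ Finset.Ico n (n + p), f b ∉ A)).card =
      ((Finset.range n).powerset.filter (fun D =>
        (D ∪ Finset.Ico n (n + p)).image f = D)).card := by
  classical
  apply Finset.card_nbij' (fun A => (gg n p f)^[n] (Finset.range n \ A))
    (fun D => Finset.range n \ reach n f D)
  · -- forward map is well-defined
    intro A hA
    rw [Finset.mem_coe, Finset.mem_filter, Finset.mem_powerset] at hA
    obtain ⟨hA1, hA2, hA3⟩ := hA
    set B := Finset.range n \ A with hBdef
    have hgB : gg n p f B ⊆ B := by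
      intro y hy
      obtain ⟨b, hb, rfl⟩ := Finset.mem_image.mp hy
      have hb' : b < n + p := by
        rcases Finset.mem_union.mp hb with h | h
        · exact lt_of_lt_of_le (Finset.mem_range.mp (Finset.mem_sdiff.mp h).1)
            (Nat.le_add_right n p)
        · exact (Finset.mem_Ico.mp h).2
      exact Finset.mem_sdiff.mpr ⟨Finset.mem_range.mpr (hf b hb'), hA3 b hb⟩
    rw [Finset.mem_coe, Finset.mem_filter, Finset.mem_powerset]
    refine ⟨(iter_gg_subset hgB n).trans Finset.sdiff_subset, ?_⟩
    exact gg_fix hgB ((Finset.card_le_card Finset.sdiff_subset).trans (by simp))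
  · -- backward map is well-defined
    intro D hD
    rw [Finset.mem_coe, Finset.mem_filter, Finset.mem_powerset] at hD
    obtain ⟨hD1, hD2⟩ := hD
    have hD2' : gg n p f D = D := hD2
    have hDf : ∀ x ∈ D, f x ∈ D := fun x hx => hD2' ▸ mem_gg_of_mem hx
    have hDT : ∀ t ∈ Finset.Ico n (n + p), f t ∈ D := fun t ht =>
      hD2' ▸ mem_gg_of_mem_Ico ht
    have hDr : D ⊆ reach n f D := fun x hx =>
      mem_reach.mpr ⟨Finset.mem_range.mp (hD1 hx), 0, by simpa⟩
    have hstep : ∀ b ∈ reach n f D, f b ∈ reach n f D := by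
      intro b hb
      obtain ⟨hbn, k, hk⟩ := mem_reach.mp hb
      refine mem_reach.mpr ⟨hf b (lt_of_lt_of_le hbn (Nat.le_add_right n p)), ?_⟩
      cases k with
      | zero => exact ⟨0, by simpa using hDf b (by simpa using hk)⟩
      | succ j => exact ⟨j, by rwa [← Function.iterate_succ_apply]⟩
    rw [Finset.mem_coe, Finset.mem_filter, Finset.mem_powerset]
    refine ⟨Finset.sdiff_subset, ?_, ?_⟩
    · intro a ha
      obtain ⟨han, hanr⟩ := Finset.mem_sdiff.mp ha
      refine Finset.mem_sdiff.mpr ⟨Finset.mem_range.mpr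
        (hf a (lt_of_lt_of_le (Finset.mem_range.mp han) (Nat.le_add_right n p))), ?_⟩
      intro hfa
      obtain ⟨-, k, hk⟩ := mem_reach.mp hfa
      exact hanr (mem_reach.mpr ⟨Finset.mem_range.mp han, k + 1,
        by rwa [Function.iterate_succ_apply]⟩)
    · intro b hb
      have hbr : f b ∈ reach n f D := by
        rcases Finset.mem_union.mp hb with h | h
        · obtain ⟨hbn, hbA⟩ := Finset.mem_sdiff.mp h
          have : b ∈ reach n f D := by
            by_contra hc
            exact hbA (Finset.mem_sdiff.mpr ⟨hbn, hc⟩)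
          exact hstep b this
        · exact hDr (hDT b h)
      intro hbA
      exact (Finset.mem_sdiff.mp hbA).2 hbr
  · -- left inverse
    intro A hA
    beta_reduce
    rw [Finset.mem_coe, Finset.mem_filter, Finset.mem_powerset] at hA
    obtain ⟨hA1, hA2, hA3⟩ := hA
    set B := Finset.range n \ A with hBdef
    have hgB : gg n p f B ⊆ B := by
      intro y hy
      obtain ⟨b, hb, rfl⟩ := Finset.mem_image.mp hy
      have hb' : b < n + p := by
        rcases Finset.mem_union.mp hb with h | h
        · exact lt_of_lt_of_le (Finset.mem_range.mp (Finset.mem_sdiff.mp h).1)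
            (Nat.le_add_right n p)
        · exact (Finset.mem_Ico.mp h).2
      exact Finset.mem_sdiff.mpr ⟨Finset.mem_range.mpr (hf b hb'), hA3 b hb⟩
    have hreach : reach n f ((gg n p f)^[n] B) = B := by
      apply Finset.Subset.antisymm
      · intro x hx
        obtain ⟨hxn, k, hk⟩ := mem_reach.mp hx
        have hkB : f^[k] x ∈ B := iter_gg_subset hgB n hk
        refine Finset.mem_sdiff.mpr ⟨Finset.mem_range.mpr hxn, fun hxA => ?_⟩
        exact (Finset.mem_sdiff.mp hkB).2 (closed_iter hA2 hxA k)
      · intro b hb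
        exact mem_reach.mpr ⟨Finset.mem_range.mp (Finset.mem_sdiff.mp hb).1, n,
          iter_mem_iter hb n⟩
    rw [hreach, hBdef, Finset.sdiff_sdiff_self_left, Finset.inter_eq_right.mpr hA1]
  · -- right inverse
    intro D hD
    rw [Finset.mem_coe, Finset.mem_filter, Finset.mem_powerset] at hD
    obtain ⟨hD1, hD2⟩ := hD
    have hD2' : gg n p f D = D := hD2
    have hDf : ∀ x ∈ D, f x ∈ D := fun x hx => hD2' ▸ mem_gg_of_mem hx
    have hDT : ∀ t ∈ Finset.Ico n (n + p), f t ∈ D := fun t ht =>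
      hD2' ▸ mem_gg_of_mem_Ico ht
    have hDr : D ⊆ reach n f D := fun x hx =>
      mem_reach.mpr ⟨Finset.mem_range.mp (hD1 hx), 0, by simpa⟩
    have hrn : reach n f D ⊆ Finset.range n := fun x hx =>
      Finset.mem_range.mpr (mem_reach.mp hx).1
    have hsimp : Finset.range n \ (Finset.range n \ reach n f D) = reach n f D := by
      rw [Finset.sdiff_sdiff_self_left, Finset.inter_eq_right.mpr hrn]
    show (gg n p f)^[n] (Finset.range n \ (Finset.range n \ reach n f D)) = D
    rw [hsimp]
    apply Finset.Subset.antisymm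
    · intro x hx
      rcases gg_iter_mem hDf hDT n x hx with h | ⟨c, hc, rfl⟩
      · exact h
      · obtain ⟨hcn, hck⟩ := mem_reach.mp hc
        exact witness_le hf hDf hcn hck
    · calc D = (gg n p f)^[n] D := (gg_iter_fix hD2' n).symm
        _ ⊆ (gg n p f)^[n] (reach n f D) := gg_mono.iterate n hDr
end

section
/- Let n be a nonnegative integer, let R be a commutative semiring, and let w : Fin n → R be an assignment of weights. For a function f from Fin n to Fin n define w(f) := ∏_{i ∈ Fin n} w(f(i)). Then the sum of w(f) over all pairs (f, A), with A a subset of Fin n satisfying f(A) ⊆ A and f(Aᶜ) ⊆ Aᶜ, equals the sum of w(f) over all pairs (f, D), with D a subset of Fin n satisfying f(D) = D. -/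
section Aux

variable {n : ℕ} (f : Fin n → Fin n)

private lemma iter_mem {A : Finset (Fin n)} (hA : A.image f ⊆ A) {x : Fin n}
    (hx : x ∈ A) (k : ℕ) : f^[k] x ∈ A := by
  induction k with
  | zero => simpa
  | succ k ih =>
    rw [Function.iterate_succ_apply']
    exact hA (Finset.mem_image_of_mem f ih)

private lemma eventually_periodic (x : Fin n) :
    ∃ k p, 0 < p ∧ f^[p] (f^[k] x) = f^[k] x := by
  have h : ¬ Function.Injective (fun i : Fin (n + 1) => f^[i] x) := by
    intro h
    have := Fintype.card_le_of_injective _ h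
    simp at this
  rw [Function.not_injective_iff] at h
  obtain ⟨i, j, hij, hne⟩ := h
  rcases lt_or_gt_of_ne (Fin.val_ne_of_ne hne) with h | h
  · refine ⟨i, j - i, by omega, ?_⟩
    rw [← Function.iterate_add_apply, show (j : ℕ) - i + i = j by omega]
    exact hij.symm
  · refine ⟨j, i - j, by omega, ?_⟩
    rw [← Function.iterate_add_apply, show (i : ℕ) - j + j = i by omega]
    exact hij

private lemma iterate_mul_fixed {x : Fin n} {p : ℕ} (hx : f^[p] x = x) (t : ℕ) :
    f^[p * t] x = x := by
  induction t with
  | zero => simp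
  | succ t ih =>
    rw [Nat.mul_succ, Function.iterate_add_apply, hx, ih]

private lemma mem_perm_periodic {D : Finset (Fin n)} (hD : D.image f = D) {x : Fin n}
    (hx : x ∈ D) : ∃ p, 0 < p ∧ f^[p] x = x := by
  have hsub : D.image f ⊆ D := hD.le
  have hinj : Set.InjOn f D := Finset.injOn_of_card_image_eq (by rw [hD])
  obtain ⟨k, p, hp, hper⟩ := eventually_periodic f x
  refine ⟨p, hp, ?_⟩
  induction k with
  | zero => simpa using hper
  | succ k ih =>
    apply ih
    have h1 : f^[p] (f^[k+1] x) = f (f^[p] (f^[k] x)) := by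
      rw [Function.iterate_succ_apply', ← Function.iterate_succ_apply,
        Function.iterate_succ_apply']
    rw [h1, Function.iterate_succ_apply'] at hper
    exact hinj (by
        rw [← Function.iterate_add_apply]
        exact iter_mem f hsub hx (p + k))
      (iter_mem f hsub hx k) hper

private lemma card_filter_eq (f : Fin n → Fin n) :
    (Finset.univ.filter
        (fun A : Finset (Fin n) => A.image f ⊆ A ∧ Aᶜ.image f ⊆ Aᶜ)).card =
      (Finset.univ.filter (fun D : Finset (Fin n) => D.image f = D)).card := by
  classical
  apply Finset.card_bij'
    (i := fun A _ => A.filter (fun x => ∃ p, 0 < p ∧ f^[p] x = x))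
    (j := fun D _ => Finset.univ.filter (fun x => ∃ k, f^[k] x ∈ D))
  · -- hi : image of the map lands in the second filter
    intro A hA
    simp only [Finset.mem_filter, Finset.mem_univ, true_and] at hA ⊢
    obtain ⟨h1, h2⟩ := hA
    ext y
    simp only [Finset.mem_image, Finset.mem_filter]
    constructor
    · rintro ⟨x, ⟨hxA, p, hp, hper⟩, rfl⟩
      refine ⟨h1 (Finset.mem_image_of_mem f hxA), p, hp, ?_⟩
      rw [← Function.iterate_succ_apply, Function.iterate_succ_apply', hper]
    · rintro ⟨hyA, p, hp, hper⟩
      refine ⟨f^[p-1] y, ⟨iter_mem f h1 hyA _, p, hp, ?_⟩, ?_⟩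
      · rw [← Function.iterate_add_apply, show p + (p - 1) = (p - 1) + p by omega,
          Function.iterate_add_apply, hper]
      · refine (Function.iterate_succ_apply' f (p-1) y).symm.trans ?_
        rw [show (p - 1).succ = p by omega, hper]
  · -- hj
    intro D hD
    simp only [Finset.mem_filter, Finset.mem_univ, true_and] at hD ⊢
    constructor
    · intro y hy
      simp only [Finset.mem_image, Finset.mem_filter, Finset.mem_univ, true_and] at hy ⊢
      obtain ⟨x, ⟨k, hk⟩, rfl⟩ := hy
      refine ⟨k, ?_⟩
      rw [← Function.iterate_succ_apply, Function.iterate_succ_apply']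
      exact hD.le (Finset.mem_image_of_mem f hk)
    · intro y hy
      simp only [Finset.mem_image, Finset.mem_compl, Finset.mem_filter, Finset.mem_univ,
        true_and, not_exists] at hy ⊢
      obtain ⟨x, hx, rfl⟩ := hy
      intro k hk
      exact hx (k + 1) (by rwa [Function.iterate_succ_apply])
  · -- left_inv : recovering A
    intro A hA
    simp only [Finset.mem_filter, Finset.mem_univ, true_and] at hA
    obtain ⟨h1, h2⟩ := hA
    ext x
    simp only [Finset.mem_filter, Finset.mem_univ, true_and]
    constructor
    · rintro ⟨k, hk, _⟩
      by_contra hx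
      exact absurd hk (Finset.mem_compl.mp (iter_mem f h2 (Finset.mem_compl.mpr hx) k))
    · intro hx
      obtain ⟨k, p, hp, hper⟩ := eventually_periodic f x
      exact ⟨k, iter_mem f h1 hx k, p, hp, hper⟩
  · -- right_inv : recovering D
    intro D hD
    simp only [Finset.mem_filter, Finset.mem_univ, true_and] at hD
    ext x
    simp only [Finset.mem_filter, Finset.mem_univ, true_and]
    constructor
    · rintro ⟨⟨k, hk⟩, p, hp, hper⟩
      have : f^[p * k - k] (f^[k] x) ∈ D := iter_mem f hD.le hk _
      rwa [← Function.iterate_add_apply, show p * k - k + k = p * k by have := Nat.le_mul_of_pos_left k hp; omega,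
        iterate_mul_fixed f hper k] at this
    · intro hx
      exact ⟨⟨0, by simpa⟩, mem_perm_periodic f hD hx⟩

end Aux

/-- Hurwitz-type weighted generalization: with weight `w(f) = ∏_i w(f(i))`, the sum of
`w(f)` over pairs `(f, A)` with `f(A) ⊆ A` and `f(Aᶜ) ⊆ Aᶜ` equals the sum of `w(f)`
over pairs `(f, D)` with `f(D) = D`. -/
theorem weighted_pairs_sum_eq (n : ℕ) (R : Type*) [CommSemiring R] (w : Fin n → R) :
    (∑ f : Fin n → Fin n,
        ∑ A ∈ Finset.univ.filter
          (fun A : Finset (Fin n) => A.image f ⊆ A ∧ Aᶜ.image f ⊆ Aᶜ),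
          ∏ i : Fin n, w (f i)) =
      ∑ f : Fin n → Fin n,
        ∑ D ∈ Finset.univ.filter (fun D : Finset (Fin n) => D.image f = D),
          ∏ i : Fin n, w (f i) := by
  refine Finset.sum_congr rfl fun f _ => ?_
  rw [Finset.sum_const, Finset.sum_const, card_filter_eq f]
end

section
/- For every nonnegative integer n and all real numbers r, s with r ≠ 0, ∑_{k=0}^{n} C(n,k) · (r+k)^{k-1} · (s-k)^{n-k} = (r+s)^n / r, where (r+k)^{k-1} is interpreted via the integer power (so the k = 0 term is r^{-1} s^n). -/
open Finset Polynomial fwdDiff in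
private lemma abel_chooseid (n k : ℕ) (hk : k ≤ n) :
    (n + 1 - k) * (n + 1).choose k = (n + 1) * n.choose k := by
  have h3 := Nat.add_one_mul_choose_eq n (n - k)
  rw [Nat.choose_symm hk] at h3
  have h4 : (n + 1).choose (n - k + 1) = (n + 1).choose k := by
    rw [show n - k + 1 = n + 1 - k from by omega, Nat.choose_symm (by omega)]
  rw [h4] at h3
  rw [show n + 1 - k = n - k + 1 from by omega, mul_comm]
  exact h3.symm

open Finset Polynomial fwdDiff in
private lemma abel_fwdDiff_iter_poly : ∀ (m : ℕ) (p : ℝ[X]), p.natDegree < m → ∀ y : ℝ,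
    (Δ_[(1:ℝ)])^[m] (fun t => p.eval t) y = 0 := by
  intro m
  induction m with
  | zero => intro p hp; exact absurd hp (Nat.not_lt_zero _)
  | succ m IH =>
    intro p hp y
    have hq : Δ_[(1:ℝ)] (fun t => p.eval t) = fun t => (p.comp (X + 1) - p).eval t := by
      funext t
      simp [fwdDiff, eval_comp]
    rw [Function.iterate_succ_apply, hq]
    by_cases h0 : p.comp (X + 1) - p = 0
    · rw [h0]
      have : (fun t : ℝ => (0 : ℝ[X]).eval t) = fun _ : ℝ => (0:ℝ) := by funext t; simp
      rw [this]
      simp [fwdDiff_iter_eq_sum_shift]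
    · apply IH
      have hp0 : p ≠ 0 := by rintro rfl; simp at h0
      have hX1 : (X + 1 : ℝ[X]).natDegree = 1 := by
        simpa using natDegree_X_add_C (1:ℝ)
      have hlc : (p.comp (X + 1)).leadingCoeff = p.leadingCoeff := by
        rw [leadingCoeff_comp (by rw [hX1]; norm_num)]
        have : (X + 1 : ℝ[X]).leadingCoeff = 1 := by
          simpa using leadingCoeff_X_add_C (1:ℝ)
        simp [this]
      have hc0 : p.comp (X + 1) ≠ 0 := fun h =>
        hp0 (leadingCoeff_eq_zero.mp (by rw [← hlc, h, leadingCoeff_zero]))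
      have hndc : (p.comp (X + 1)).natDegree = p.natDegree := by
        simp [natDegree_comp, hX1]
      have hdeg : (p.comp (X + 1)).degree = p.degree := by
        rw [degree_eq_natDegree hc0, degree_eq_natDegree hp0, hndc]
      have hlt := Polynomial.degree_sub_lt hdeg hc0 hlc
      have := Polynomial.natDegree_lt_natDegree h0 hlt
      omega

open Finset Polynomial fwdDiff in
private lemma abel_alt_sum (n : ℕ) (r : ℝ) :
    ∑ k ∈ Finset.range (n + 2), (-1:ℝ)^(n+1-k) * ((n+1).choose k) * (r + k)^n = 0 := by
  have h := fwdDiff_iter_eq_sum_shift (1:ℝ) (fun t : ℝ => (((X : ℝ[X]) + C r)^n).eval t) (n+1) 0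
  rw [abel_fwdDiff_iter_poly (n+1) _
      (by simp [natDegree_pow] : (((X : ℝ[X]) + C r)^n).natDegree < n + 1) 0] at h
  have h2 : ∀ k ∈ Finset.range (n+2),
      ((-1 : ℤ) ^ (n+1-k) * ((n+1).choose k : ℤ)) •
          (fun t : ℝ => (((X : ℝ[X]) + C r)^n).eval t) (0 + k • (1:ℝ))
        = (-1:ℝ)^(n+1-k) * ((n+1).choose k) * (r + k)^n := by
    intro k hk
    simp only [zsmul_eq_mul, eval_pow, eval_add, eval_X, eval_C]
    push_cast
    ring_nf
  rw [Finset.sum_congr rfl h2] at h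
  exact h.symm

private lemma abel_eval_neg (n : ℕ) (r : ℝ) (hr : r ≠ 0) :
    ∑ k ∈ Finset.range (n+2),
      ((n+1).choose k : ℝ) * (r + k)^((k:ℤ)-1) * ((-r : ℝ) - k)^(n+1-k) = 0 := by
  have h : ∀ k ∈ Finset.range (n+2),
      ((n+1).choose k : ℝ) * (r + k)^((k:ℤ)-1) * ((-r : ℝ) - k)^(n+1-k)
        = (-1:ℝ)^(n+1-k) * ((n+1).choose k) * (r + k)^n := by
    intro k hk
    rw [Finset.mem_range] at hk
    have hneg : ((-r : ℝ) - k)^(n+1-k) = (-1:ℝ)^(n+1-k) * (r + k)^(n+1-k) := by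
      rw [show (-r : ℝ) - k = (-1) * (r + k) by ring, mul_pow]
    rw [hneg]
    rcases Nat.eq_zero_or_pos k with rfl | hk1
    · simp only [Nat.cast_zero, add_zero, Nat.sub_zero, zpow_sub_one₀ hr]
      field_simp
      ring
    · have hz : (r + (k:ℝ))^((k:ℤ)-1) = (r + k)^(k-1 : ℕ) := by
        rw [show (k:ℤ) - 1 = ((k - 1 : ℕ) : ℤ) by omega, zpow_natCast]
      rw [hz, show n+1-k = n-(k-1) from by omega]
      have hpow : (r + (k:ℝ))^(k-1 : ℕ) * (r + k)^(n-(k-1)) = (r + k)^n := by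
        rw [← pow_add, show k-1 + (n-(k-1)) = n from by omega]
      calc ((n+1).choose k : ℝ) * (r + k)^(k-1:ℕ) * ((-1:ℝ)^(n-(k-1)) * (r + k)^(n-(k-1)))
          = (-1:ℝ)^(n-(k-1)) * ((n+1).choose k)
              * ((r + k)^(k-1:ℕ) * (r + k)^(n-(k-1))) := by ring
        _ = (-1:ℝ)^(n-(k-1)) * ((n+1).choose k) * (r + k)^n := by rw [hpow]
  rw [Finset.sum_congr rfl h]
  exact abel_alt_sum n r

/-- Abel's identity: for `r ≠ 0`,
`∑_{k=0}^n C(n,k) (r+k)^{k-1} (s-k)^{n-k} = (r+s)^n / r`. -/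
theorem abel_identity (n : ℕ) (r s : ℝ) (hr : r ≠ 0) :
    ∑ k ∈ Finset.range (n + 1),
        (n.choose k : ℝ) * (r + k) ^ ((k : ℤ) - 1) * (s - k) ^ (n - k) =
      (r + s) ^ n / r := by
  induction n generalizing s with
  | zero => simp [zpow_neg]
  | succ n IH =>
    set F : ℝ → ℝ := fun y =>
      (∑ k ∈ Finset.range (n + 2),
        ((n+1).choose k : ℝ) * (r + k) ^ ((k : ℤ) - 1) * (y - k) ^ (n + 1 - k))
        - (r + y)^(n+1)/r with hF_def
    have hF : ∀ y : ℝ, HasDerivAt F 0 y := by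
      intro y
      have h1 : HasDerivAt (fun y : ℝ => ∑ k ∈ Finset.range (n+2),
          ((n+1).choose k : ℝ) * (r + k) ^ ((k : ℤ) - 1) * (y - k) ^ (n + 1 - k))
          (∑ k ∈ Finset.range (n+2),
            ((n+1).choose k : ℝ) * (r + k) ^ ((k : ℤ) - 1)
              * ((n+1-k : ℕ) * (y - k) ^ (n + 1 - k - 1))) y := by
        apply HasDerivAt.fun_sum
        intro k hk
        have h : HasDerivAt (fun y : ℝ => (y - (k:ℝ))^(n+1-k))
            ((n+1-k : ℕ) * (y - k)^(n+1-k-1)) y := by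
          convert ((hasDerivAt_id y).sub_const (k:ℝ)).pow (n+1-k) using 1
          · rfl
          · rfl
          · funext t; simp
          · simp
        exact h.const_mul _
      have h2 : HasDerivAt (fun y : ℝ => (r + y)^(n+1)/r) ((n+1 : ℕ) * (r+y)^n / r) y := by
        have h : HasDerivAt (fun y : ℝ => (r + y)^(n+1)) ((n+1 : ℕ) * (r+y)^n) y := by
          convert ((hasDerivAt_id y).const_add r).pow (n+1) using 1
          · rfl
          · rfl
          · funext t; simp
          · simp
        exact h.div_const r
      have hsum : (∑ k ∈ Finset.range (n+2),
          ((n+1).choose k : ℝ) * (r + k) ^ ((k : ℤ) - 1)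
            * ((n+1-k : ℕ) * (y - k) ^ (n + 1 - k - 1)))
          = (n+1 : ℕ) * (r+y)^n / r := by
        rw [Finset.sum_range_succ]
        simp only [Nat.sub_self, Nat.cast_zero, zero_mul, mul_zero, add_zero]
        have h : ∀ k ∈ Finset.range (n+1),
            ((n+1).choose k : ℝ) * (r + k) ^ ((k : ℤ) - 1)
                * ((n+1-k : ℕ) * (y - k) ^ (n + 1 - k - 1))
              = (n+1 : ℕ) * ((n.choose k : ℝ) * (r + k) ^ ((k : ℤ) - 1) * (y - k) ^ (n - k)) := by
          intro k hk
          rw [Finset.mem_range] at hk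
          have hk' : k ≤ n := by omega
          have he : n + 1 - k - 1 = n - k := by omega
          have hc : ((n+1-k : ℕ) : ℝ) * ((n+1).choose k : ℝ)
              = ((n+1 : ℕ) : ℝ) * (n.choose k : ℝ) := by
            exact_mod_cast congrArg (fun m : ℕ => (m : ℝ)) (abel_chooseid n k hk')
          rw [he]
          calc ((n+1).choose k : ℝ) * (r + k) ^ ((k : ℤ) - 1) * ((n+1-k : ℕ) * (y - k) ^ (n - k))
              = (((n+1-k : ℕ) : ℝ) * ((n+1).choose k : ℝ))
                  * ((r + k) ^ ((k : ℤ) - 1) * (y - k) ^ (n - k)) := by ring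
            _ = (((n+1 : ℕ) : ℝ) * (n.choose k : ℝ))
                  * ((r + k) ^ ((k : ℤ) - 1) * (y - k) ^ (n - k)) := by rw [hc]
            _ = (n+1 : ℕ) * ((n.choose k : ℝ) * (r + k) ^ ((k : ℤ) - 1) * (y - k) ^ (n - k)) := by
                  ring
        rw [Finset.sum_congr rfl h, ← Finset.mul_sum, IH y]
        ring
      have := h1.sub h2
      rw [hsum, sub_self] at this
      exact this
    have hconst : F s = F (-r) :=
      is_const_of_deriv_eq_zero (fun y => (hF y).differentiableAt) (fun y => (hF y).deriv) s (-r)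
    have hF0 : F (-r) = 0 := by
      rw [hF_def]
      simp only
      rw [abel_eval_neg n r hr, show r + -r = (0:ℝ) by ring, zero_pow (Nat.succ_ne_zero n),
        zero_div, sub_zero]
    have := hconst.trans hF0
    rw [hF_def] at this
    simp only at this
    linarith [this]
end

section
/- Let r, s be real numbers such that r + j ≠ 0 and s - j ≠ 0 for every natural number j. For natural numbers n, k define F(n,k)(r,s) := C(n,k)·(r+k)^{k-1}·(s-k)^{n-k} and G(n,k) := (s-n)·C(n-1,k-1)·(k+r)^{k-1}·(s-k)^{n-k-1}, where all powers with possibly negative exponents are integer powers (zpow) and C(a,b) = 0 when b > a or b < 0. Then for all n ≥ 2 and all k with 0 ≤ k ≤ n: F(n,k)(r,s) - s·F(n-1,k)(r,s) - (n+r)·F(n-1,k)(r+1,s-1) + (n-1)(r+s)·F(n-2,k)(r+1,s-1) = G(n,k) - G(n,k+1). -/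
/-- The summand of Abel's identity:
`F(n,k)(r,s) = C(n,k) (r+k)^{k-1} (s-k)^{n-k}`, with integer powers. -/
noncomputable def abelF (r s : ℝ) (n k : ℕ) : ℝ :=
  (n.choose k : ℝ) * (r + k) ^ ((k : ℤ) - 1) * (s - k) ^ ((n : ℤ) - k)

/-- The WZ certificate `G(n,k) = (s-n) C(n-1,k-1) (k+r)^{k-1} (s-k)^{n-k-1}`,
with integer powers, where `C(n-1,k-1) = 0` when `k-1 < 0` (i.e. `k = 0`). -/
noncomputable def abelG (r s : ℝ) (n k : ℕ) : ℝ :=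
  if k = 0 then 0
  else (s - n) * ((n - 1).choose (k - 1) : ℝ) * ((k : ℝ) + r) ^ ((k : ℤ) - 1) *
    (s - k) ^ ((n : ℤ) - k - 1)

lemma abelF_eq (r s : ℝ) (n k a b : ℕ) (h1 : (k:ℤ)-1 = a) (h2 : (n:ℤ)-k = b) :
    abelF r s n k = (n.choose k : ℝ) * (r+(k:ℝ))^a * (s-(k:ℝ))^b := by
  simp only [abelF]; rw [h1, h2, zpow_natCast, zpow_natCast]

lemma abelG_eq (r s : ℝ) (n k a b : ℕ) (hk0 : k ≠ 0) (h1 : (k:ℤ)-1 = a) (h2 : (n:ℤ)-k-1 = b) :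
    abelG r s n k = (s-(n:ℝ)) * ((n-1).choose (k-1) : ℝ) * ((k:ℝ)+r)^a * (s-(k:ℝ))^b := by
  simp only [abelG, if_neg hk0]; rw [h1, h2, zpow_natCast, zpow_natCast]

lemma abelG_eq' (r s : ℝ) (n k a : ℕ) (hk0 : k ≠ 0) (h1 : (k:ℤ)-1 = a) (h2 : (n:ℤ)-k-1 = -1) :
    abelG r s n k = (s-(n:ℝ)) * ((n-1).choose (k-1) : ℝ) * ((k:ℝ)+r)^a * (s-(k:ℝ))⁻¹ := by
  simp only [abelG, if_neg hk0]; rw [h1, h2, zpow_natCast, zpow_neg_one]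

lemma abelF_zero (r s : ℝ) (n k : ℕ) (h : n < k) : abelF r s n k = 0 := by
  simp [abelF, Nat.choose_eq_zero_of_lt h]

lemma abelG_zero (r s : ℝ) (n k : ℕ) (h : n - 1 < k - 1) : abelG r s n k = 0 := by
  rcases eq_or_ne k 0 with rfl | hk0
  · simp [abelG]
  · simp [abelG, if_neg hk0, Nat.choose_eq_zero_of_lt h]

lemma main_case (r s : ℝ) (m j : ℕ) :
    abelF r s (m+j+3) (m+1) - s * abelF r s (m+j+3 - 1) (m+1)
        - (((m+j+3 : ℕ) : ℝ) + r) * abelF (r + 1) (s - 1) (m+j+3 - 1) (m+1)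
        + (((m+j+3 : ℕ) : ℝ) - 1) * (r + s) * abelF (r + 1) (s - 1) (m+j+3 - 2) (m+1) =
      abelG r s (m+j+3) (m+1) - abelG r s (m+j+3) (m+1 + 1) := by
  have hP : (((m+j+3).choose (m+1) : ℕ) : ℝ) = ((m+j+2).choose (m+1) : ℕ) + ((m+j+2).choose m : ℕ) := by
    have : (m+j+3).choose (m+1) = (m+j+2).choose (m+1) + (m+j+2).choose m := by
      rw [Nat.choose_succ_succ' (m+j+2) m, Nat.add_comm]
    exact_mod_cast congrArg (Nat.cast : ℕ → ℝ) this
  have hA : ((m:ℝ)+1) * (((m+j+3).choose (m+1) : ℕ) : ℝ) = ((m:ℝ)+j+3) * (((m+j+2).choose m : ℕ) : ℝ) := by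
    have h2 : (m+j+3) * ((m+j+2).choose m) = ((m+j+3).choose (m+1)) * (m+1) :=
      Nat.add_one_mul_choose_eq (m+j+2) m
    have := congrArg (Nat.cast : ℕ → ℝ) h2
    push_cast at this; linarith
  have hB : ((j:ℝ)+1) * (((m+j+2).choose (m+1) : ℕ) : ℝ) = ((m:ℝ)+j+2) * (((m+j+1).choose (m+1) : ℕ) : ℝ) := by
    have h2 : (m+j+1).choose (m+1) * (m+j+2) = (m+j+2).choose (m+1) * (j+1) := by
      have := Nat.choose_mul_succ_eq (m+j+1) (m+1)
      rw [show m+j+1+1 = m+j+2 from rfl] at this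
      rw [this]; congr 1; omega
    have := congrArg (Nat.cast : ℕ → ℝ) h2
    push_cast at this; linarith
  simp only [show m+j+3-1 = m+j+2 by omega, show m+j+3-2 = m+j+1 by omega]
  rw [abelF_eq r s (m+j+3) (m+1) m (j+2) (by push_cast; try ring) (by push_cast; try ring),
     abelF_eq r s (m+j+2) (m+1) m (j+1) (by push_cast; try ring) (by push_cast; try ring),
     abelF_eq (r+1) (s-1) (m+j+2) (m+1) m (j+1) (by push_cast; try ring) (by push_cast; try ring),
     abelF_eq (r+1) (s-1) (m+j+1) (m+1) m j (by push_cast; try ring) (by push_cast; try ring),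
     abelG_eq r s (m+j+3) (m+1) m (j+1) (Nat.succ_ne_zero _) (by push_cast; try ring) (by push_cast; try ring),
     abelG_eq r s (m+j+3) (m+2) (m+1) j (Nat.succ_ne_zero _) (by push_cast; try ring) (by push_cast; try ring)]
  simp only [show m+j+3-1 = m+j+2 by omega, show m+1-1 = m by omega, show m+2-1 = m+1 by omega]
  push_cast
  linear_combination ((r+(m:ℝ)+1)^m * (s-(m:ℝ)-1)^(j+1) * s) * hP
    - ((r+(m:ℝ)+1)^m * (s-(m:ℝ)-1)^(j+1)) * hA
    - ((r+(m:ℝ)+2)^m * (s-(m:ℝ)-2)^j * (r+s)) * hB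

/-- The computer-generated certificate identity of the Ekhad–Majewicz proof of
Abel's identity: for `n ≥ 2` and `0 ≤ k ≤ n`,
`F(n,k)(r,s) - s F(n-1,k)(r,s) - (n+r) F(n-1,k)(r+1,s-1)
  + (n-1)(r+s) F(n-2,k)(r+1,s-1) = G(n,k) - G(n,k+1)`. -/
theorem ekhad_majewicz_certificate (r s : ℝ)
    (hr : ∀ j : ℕ, r + j ≠ 0) (hs : ∀ j : ℕ, s - j ≠ 0)
    (n : ℕ) (hn : 2 ≤ n) (k : ℕ) (hk : k ≤ n) :
    abelF r s n k - s * abelF r s (n - 1) k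
        - ((n : ℝ) + r) * abelF (r + 1) (s - 1) (n - 1) k
        + ((n : ℝ) - 1) * (r + s) * abelF (r + 1) (s - 1) (n - 2) k =
      abelG r s n k - abelG r s n (k + 1) := by
  have hr0 : r ≠ 0 := by have := hr 0; simpa using this
  have hr1 : r + 1 ≠ 0 := by have := hr 1; simpa using this
  obtain ⟨N, rfl⟩ : ∃ N, n = N + 2 := ⟨n - 2, by omega⟩
  rcases eq_or_ne k 0 with rfl | hk0
  · -- k = 0
    have F0 : ∀ (r s : ℝ) (n : ℕ), abelF r s n 0 = r⁻¹ * s ^ n := by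
      intro r s n
      simp only [abelF, Nat.choose_zero_right, Nat.cast_one, Nat.cast_zero, add_zero, sub_zero,
        zero_sub, one_mul, zpow_neg_one, zpow_natCast]
    rw [F0, F0, F0, F0,
      abelG_eq r s (N+2) 1 0 N one_ne_zero (by push_cast; try ring) (by push_cast; try ring)]
    simp only [abelG, if_pos rfl, Nat.add_sub_cancel, Nat.sub_self, Nat.choose_zero_right]
    push_cast
    try simp only [show N+2-1 = N+1 by omega, show N+2-2 = N by omega]
    field_simp [hr0, hr1]
    ring
  · rcases eq_or_ne k (N+2) with rfl | hkn
    · -- k = n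
      have hsn : s - ((N:ℝ)+2) ≠ 0 := by have := hs (N+2); push_cast at this; exact this
      rw [abelF_eq r s (N+2) (N+2) (N+1) 0 (by push_cast; try ring) (by push_cast; try ring),
        abelF_zero r s (N+2-1) (N+2) (by omega),
        abelF_zero (r+1) (s-1) (N+2-1) (N+2) (by omega),
        abelF_zero (r+1) (s-1) (N+2-2) (N+2) (by omega),
        abelG_eq' r s (N+2) (N+2) (N+1) (by omega) (by push_cast; try ring) (by push_cast; try ring),
        abelG_zero r s (N+2) (N+2+1) (by omega)]
      simp only [Nat.choose_self, Nat.cast_one, Nat.add_sub_cancel, Nat.sub_self]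
      push_cast
      field_simp [hsn]
      ring
    · rcases eq_or_ne k (N+1) with rfl | hkn1
      · -- k = n - 1
        have hsn : s - ((N:ℝ)+2) ≠ 0 := by have := hs (N+2); push_cast at this; exact this
        rw [abelF_eq r s (N+2) (N+1) N 1 (by push_cast; try ring) (by push_cast; try ring),
          show N+2-1 = N+1 by omega, show N+2-2 = N by omega,
          abelF_eq r s (N+1) (N+1) N 0 (by push_cast; try ring) (by push_cast; try ring),
          abelF_eq (r+1) (s-1) (N+1) (N+1) N 0 (by push_cast; try ring) (by push_cast; try ring),
          abelF_zero (r+1) (s-1) N (N+1) (by omega),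
          abelG_eq r s (N+2) (N+1) N 0 (by omega) (by push_cast; try ring) (by push_cast; try ring),
          abelG_eq' r s (N+2) (N+1+1) (N+1) (by omega) (by push_cast; try ring) (by push_cast; try ring)]
        simp only [Nat.choose_self, Nat.choose_succ_self_right, Nat.cast_one, Nat.add_sub_cancel,
          show N+1-1 = N by omega, show N+1+1-1 = N+1 by omega, Nat.sub_self]
        push_cast
        linear_combination (((N:ℝ)+2+r)^(N+1)) * mul_inv_cancel₀ hsn
      · -- 1 ≤ k ≤ n - 2
        obtain ⟨m, rfl⟩ : ∃ m, k = m + 1 := ⟨k - 1, by omega⟩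
        obtain ⟨j, rfl⟩ : ∃ j, N = m + j + 1 := ⟨N - m - 1, by omega⟩
        have H := main_case r s m j
        rw [show m+j+3 = m+j+1+2 by omega] at H
        push_cast at H ⊢
        linear_combination H
end

section
/- Let r, s be real numbers with r ≠ 0 and r + 1 ≠ 0, and for a natural number n define a(n)(r,s) := ∑_{k=0}^{n} C(n,k)·(r+k)^{k-1}·(s-k)^{n-k}, where (r+k)^{k-1} is an integer power (so the k=0 term involves 1/r). Then for every n ≥ 2: a(n)(r,s) - s·a(n-1)(r,s) - (n+r)·a(n-1)(r+1,s-1) + (n-1)(r+s)·a(n-2)(r+1,s-1) = 0. -/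
/-- The Abel sum `a_n(r,s) = ∑_{k=0}^n C(n,k) (r+k)^{k-1} (s-k)^{n-k}`,
where `(r+k)^{k-1}` is an integer power. -/
noncomputable def abelSum (n : ℕ) (r s : ℝ) : ℝ :=
  ∑ k ∈ Finset.range (n + 1),
    (n.choose k : ℝ) * (r + k) ^ ((k : ℤ) - 1) * (s - k) ^ (n - k)

lemma zpow_cast_succ_sub_one (x : ℝ) (j : ℕ) :
    x ^ (((j + 1 : ℕ) : ℤ) - 1) = x ^ j := by
  rw [show ((j + 1 : ℕ) : ℤ) - 1 = (j : ℤ) by push_cast; ring, zpow_natCast]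

lemma key_term (r s : ℝ) (hr1 : r + 1 ≠ 0) (m k : ℕ) (hk : k < m + 2) :
    ((m+2).choose (k+1) : ℝ) * (r + (k+1 : ℕ)) ^ (((k+1:ℕ):ℤ) - 1) * (s - (k+1:ℕ)) ^ (m + 2 - (k+1))
    - s * (((m+1).choose (k+1) : ℝ) * (r + (k+1:ℕ)) ^ (((k+1:ℕ):ℤ) - 1) * (s - (k+1:ℕ)) ^ (m + 1 - (k+1)))
    - (((m+2:ℕ):ℝ) + r) * (((m+1).choose k : ℝ) * (r + 1 + k) ^ ((k:ℤ) - 1) * (s - 1 - k) ^ (m + 1 - k))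
    + (((m+2:ℕ):ℝ) - 1) * (r + s) * ((m.choose k : ℝ) * (r + 1 + k) ^ ((k:ℤ) - 1) * (s - 1 - k) ^ (m - k)) = 0 := by
  rcases k with _ | k
  · -- k = 0
    simp only [Nat.choose_one_right, Nat.choose_zero_right, zpow_cast_succ_sub_one,
      Nat.cast_zero, Nat.cast_one, pow_zero, Nat.add_sub_cancel, Nat.sub_zero]
    rw [show ((0:ℤ)) - 1 = -1 by norm_num, zpow_neg_one]
    rw [show m + 2 - 1 = m + 1 by omega]
    push_cast
    simp only [zero_add, Nat.choose_one_right]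
    push_cast
    have hr1' : (1:ℝ) + r ≠ 0 := by rwa [add_comm]
    field_simp
    ring_nf
    field_simp
    ring
  · by_cases hkm : k = m
    · subst hkm
      simp only [Nat.choose_self, Nat.choose_succ_self, zpow_cast_succ_sub_one,
        Nat.cast_zero, Nat.cast_one]
      push_cast
      ring_nf
    · have hkm' : k + 1 ≤ m := by omega
      obtain ⟨p, rfl⟩ : ∃ p, m = k + p + 1 := ⟨m - (k+1), by omega⟩
      rw [show k + p + 1 + 2 - (k + 1 + 1) = p + 1 by omega,
        show k + p + 1 + 1 - (k + 1 + 1) = p by omega,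
        show k + p + 1 + 1 - (k + 1) = p + 1 by omega,
        show k + p + 1 - (k + 1) = p by omega,
        show k + p + 1 + 2 = k + p + 1 + 1 + 1 by omega]
      simp only [zpow_cast_succ_sub_one]
      have H1 := congrArg (Nat.cast : ℕ → ℝ) (Nat.choose_succ_succ' (k + p + 1 + 1) (k + 1))
      have H2 := congrArg (Nat.cast : ℕ → ℝ) (Nat.add_one_mul_choose_eq (k + p + 1) (k + 1))
      have H3 := congrArg (Nat.cast : ℕ → ℝ) (Nat.choose_mul_succ_eq (k + p + 1) (k + 1))
      rw [show k + p + 1 + 1 - (k + 1) = p + 1 by omega] at H3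
      push_cast at H1 H2 H3 ⊢
      linear_combination ((r + (k:ℝ) + 2)^(k+1) * (s - (k:ℝ) - 2)^(p+1)) * H1
        + ((r + (k:ℝ) + 2)^(k+1) * (s - (k:ℝ) - 2)^p) * H2
        + ((r + (k:ℝ) + 2)^k * (s - (k:ℝ) - 2)^(p+1)) * H3

lemma sum_ext (f : ℕ → ℝ) (j : ℕ) (h : f (j + 1) = 0) :
    (∑ k ∈ Finset.range (j + 1), f k) = ∑ k ∈ Finset.range (j + 2), f k := by
  rw [Finset.sum_range_succ f (j + 1), h, add_zero]

/-- The functional recurrence (9) of the paper, satisfied by the Abel sum: for `n ≥ 2`,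
`a_n(r,s) - s a_{n-1}(r,s) - (n+r) a_{n-1}(r+1,s-1) + (n-1)(r+s) a_{n-2}(r+1,s-1) = 0`. -/
theorem abelSum_recurrence (r s : ℝ) (hr : r ≠ 0) (hr1 : r + 1 ≠ 0)
    (n : ℕ) (hn : 2 ≤ n) :
    abelSum n r s - s * abelSum (n - 1) r s
        - ((n : ℝ) + r) * abelSum (n - 1) (r + 1) (s - 1)
        + ((n : ℝ) - 1) * (r + s) * abelSum (n - 2) (r + 1) (s - 1) = 0 := by
  obtain ⟨m, rfl⟩ : ∃ m, n = m + 2 := ⟨n - 2, by omega⟩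
  rw [show m + 2 - 1 = m + 1 from rfl, show m + 2 - 2 = m from rfl]
  have hA : abelSum (m+2) r s
      = (∑ k ∈ Finset.range (m+2),
          (((m+2).choose (k+1) : ℝ) * (r + (k+1:ℕ)) ^ (((k+1:ℕ):ℤ) - 1) * (s - (k+1:ℕ)) ^ (m + 2 - (k+1))))
        + (((m+2).choose 0 : ℝ) * (r + (0:ℕ)) ^ (((0:ℕ):ℤ) - 1) * (s - (0:ℕ)) ^ (m + 2 - 0) : ℝ) := by
    simp only [abelSum]
    exact Finset.sum_range_succ' _ (m+2)
  have hB : abelSum (m+1) r s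
      = (∑ k ∈ Finset.range (m+2),
          (((m+1).choose (k+1) : ℝ) * (r + (k+1:ℕ)) ^ (((k+1:ℕ):ℤ) - 1) * (s - (k+1:ℕ)) ^ (m + 1 - (k+1))))
        + (((m+1).choose 0 : ℝ) * (r + (0:ℕ)) ^ (((0:ℕ):ℤ) - 1) * (s - (0:ℕ)) ^ (m + 1 - 0) : ℝ) := by
    simp only [abelSum]
    rw [Finset.sum_range_succ' _ (m+1)]
    congr 1
    apply sum_ext
    simp [Nat.choose_succ_self]
  have hC : abelSum (m+1) (r+1) (s-1)
      = ∑ k ∈ Finset.range (m+2),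
          (((m+1).choose k : ℝ) * (r + 1 + k) ^ ((k:ℤ) - 1) * (s - 1 - k) ^ (m + 1 - k)) := rfl
  have hD : abelSum m (r+1) (s-1)
      = ∑ k ∈ Finset.range (m+2),
          ((m.choose k : ℝ) * (r + 1 + k) ^ ((k:ℤ) - 1) * (s - 1 - k) ^ (m - k)) := by
    simp only [abelSum]
    apply sum_ext
    simp [Nat.choose_succ_self]
  have hsum : ∑ k ∈ Finset.range (m+2),
      (((m+2).choose (k+1) : ℝ) * (r + (k+1 : ℕ)) ^ (((k+1:ℕ):ℤ) - 1) * (s - (k+1:ℕ)) ^ (m + 2 - (k+1))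
      - s * (((m+1).choose (k+1) : ℝ) * (r + (k+1:ℕ)) ^ (((k+1:ℕ):ℤ) - 1) * (s - (k+1:ℕ)) ^ (m + 1 - (k+1)))
      - (((m+2:ℕ):ℝ) + r) * (((m+1).choose k : ℝ) * (r + 1 + k) ^ ((k:ℤ) - 1) * (s - 1 - k) ^ (m + 1 - k))
      + (((m+2:ℕ):ℝ) - 1) * (r + s) * ((m.choose k : ℝ) * (r + 1 + k) ^ ((k:ℤ) - 1) * (s - 1 - k) ^ (m - k))) = 0 :=
    Finset.sum_eq_zero (fun k hk => key_term r s hr1 m k (Finset.mem_range.mp hk))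
  rw [Finset.sum_add_distrib, Finset.sum_sub_distrib, Finset.sum_sub_distrib,
    ← Finset.mul_sum, ← Finset.mul_sum, ← Finset.mul_sum] at hsum
  have hc : (((m+2).choose 0 : ℝ) * (r + (0:ℕ)) ^ (((0:ℕ):ℤ) - 1) * (s - (0:ℕ)) ^ (m + 2 - 0) : ℝ)
      = s * (((m+1).choose 0 : ℝ) * (r + (0:ℕ)) ^ (((0:ℕ):ℤ) - 1) * (s - (0:ℕ)) ^ (m + 1 - 0) : ℝ) := by
    simp only [Nat.choose_zero_right, Nat.cast_zero, Nat.cast_one, Nat.sub_zero, add_zero, sub_zero]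
    rw [show ((0:ℤ)) - 1 = -1 by norm_num, zpow_neg_one]
    ring
  rw [hA, hB, hC, hD]
  linear_combination hsum + hc
end

section
/- Let p, q be integers, x a real number, and r, s real numbers such that r + j ≠ 0 and s - j ≠ 0 for every integer j with 0 ≤ j ≤ n+1 (for the relevant n). Define a(n)(r,s) := ∑_{k=0}^{n} C(n,k)·(r+k)^{k-1+p}·(s-k)^{n-k+q}·x^k, with all powers taken as integer powers in ℝ. Then for every n ≥ 2: a(n)(r,s) = (n·x + r·x)·a(n-1)(r+1, s-1) + s·a(n-1)(r,s) + (-n·r·x - n·s·x + r·x + s·x)·a(n-2)(r+1, s-1). -/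
/-- Key binomial-coefficient identity underlying the recurrence. -/
lemma choose_identity_abel (m k : ℕ) (hk : k ≤ m + 1) (r s : ℝ) :
    (((m+2).choose (k+1) : ℝ)) * (r + (k+1)) * (s - (k+1)) =
      ((m:ℝ) + 2 + r) * ((m+1).choose k : ℝ) * (s - (k+1))
        + s * (((m+1).choose (k+1) : ℝ)) * (r + (k+1))
        - ((m:ℝ) + 1) * (r + s) * (m.choose k : ℝ) := by
  rcases Nat.lt_or_ge k (m+1) with h | h
  · obtain ⟨l, rfl⟩ : ∃ l, m = k + l := ⟨m - k, by omega⟩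
    have h1 : (k+l+2) * ((k+l+1).choose k) = ((k+l+2).choose (k+1)) * (k+1) :=
      Nat.add_one_mul_choose_eq (k+l+1) k
    have h2 : (k+l+2) * ((k+l+1).choose (k+1)) = ((k+l+2).choose (k+1)) * (l+1) := by
      have e1 : (k+l+2).choose (k+1) = (k+l+2).choose (l+1) := by
        rw [← Nat.choose_symm (by omega : k+1 ≤ k+l+2), show (k+l+2)-(k+1) = l+1 by omega]
      have e2 : (k+l+1).choose (k+1) = (k+l+1).choose l := by
        rw [← Nat.choose_symm (by omega : k+1 ≤ k+l+1), show (k+l+1)-(k+1) = l by omega]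
      rw [e1, e2]
      exact Nat.add_one_mul_choose_eq (k+l+1) l
    have h3 : (k+l+1) * ((k+l).choose k) = ((k+l+1).choose (k+1)) * (k+1) :=
      Nat.add_one_mul_choose_eq (k+l) k
    have H1 : ((k:ℝ)+l+2) * ((k+l+1).choose k : ℝ) = ((k+l+2).choose (k+1) : ℝ) * ((k:ℝ)+1) := by
      exact_mod_cast congrArg (Nat.cast : ℕ → ℝ) h1
    have H2 : ((k:ℝ)+l+2) * ((k+l+1).choose (k+1) : ℝ)
        = ((k+l+2).choose (k+1) : ℝ) * ((l:ℝ)+1) := by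
      exact_mod_cast congrArg (Nat.cast : ℕ → ℝ) h2
    have H3 : ((k:ℝ)+l+1) * ((k+l).choose k : ℝ) = ((k+l+1).choose (k+1) : ℝ) * ((k:ℝ)+1) := by
      exact_mod_cast congrArg (Nat.cast : ℕ → ℝ) h3
    have hne : ((k:ℝ)+l+2) * ((k:ℝ)+l+1) ≠ 0 := by positivity
    refine mul_left_cancel₀ hne ?_
    push_cast
    linear_combination (-(((k:ℝ)+l+1) * (((k:ℝ)+l+2)+r) * (s-((k:ℝ)+1)))) * H1
      + (-(((k:ℝ)+l+1) * r * (s-((k:ℝ)+1)))) * H2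
      + (((k:ℝ)+l+2) * ((k:ℝ)+l+1) * (r+s)) * H3
  · have : k = m+1 := by omega
    subst this
    simp only [show m+1+1 = m+2 from rfl,
      show (m+2).choose (m+2) = 1 from Nat.choose_self _,
      show (m+1).choose (m+1) = 1 from Nat.choose_self _,
      show (m+1).choose (m+2) = 0 from Nat.choose_eq_zero_of_lt (by omega),
      show m.choose (m+1) = 0 from Nat.choose_eq_zero_of_lt (by omega)]
    push_cast
    ring

/-- The Abel-type sum `a_n(r,s) = ∑_{k=0}^n C(n,k) (r+k)^{k-1+p} (s-k)^{n-k+q} x^k`,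
with integer powers. -/
noncomputable def abelTypeSum (p q : ℤ) (x : ℝ) (n : ℕ) (r s : ℝ) : ℝ :=
  ∑ k ∈ Finset.range (n + 1),
    (n.choose k : ℝ) * (r + k) ^ ((k : ℤ) - 1 + p) * (s - k) ^ ((n : ℤ) - k + q) * x ^ k

/-- The functional recurrence produced by the Majewicz–Celine algorithm for the
Abel-type sum with hypergeometric factor `C(n,k) x^k`: for `n ≥ 2`,
`a_n(r,s) = (nx + rx) a_{n-1}(r+1,s-1) + s a_{n-1}(r,s)
  + (-nrx - nsx + rx + sx) a_{n-2}(r+1,s-1)`. -/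
theorem abelTypeSum_recurrence (p q : ℤ) (x r s : ℝ) (n : ℕ) (hn : 2 ≤ n)
    (hr : ∀ j : ℕ, j ≤ n + 1 → r + j ≠ 0) (hs : ∀ j : ℕ, j ≤ n + 1 → s - j ≠ 0) :
    abelTypeSum p q x n r s =
      ((n : ℝ) * x + r * x) * abelTypeSum p q x (n - 1) (r + 1) (s - 1)
        + s * abelTypeSum p q x (n - 1) r s
        + (-(n : ℝ) * r * x - n * s * x + r * x + s * x) *
          abelTypeSum p q x (n - 2) (r + 1) (s - 1) := by
  obtain ⟨m, rfl⟩ : ∃ m, n = m + 2 := ⟨n - 2, by omega⟩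
  have hs0 : s ≠ 0 := by
    have := hs 0 (by omega); simpa using this
  simp only [abelTypeSum, show m+2-1 = m+1 from rfl, show m+2-2 = m from rfl,
    show m+1+1 = m+2 from rfl]
  -- LHS: split off k = 0
  rw [Finset.sum_range_succ' _ (m+2)]
  -- a(m+1)(r,s): split off k = 0
  rw [Finset.sum_range_succ'
    (fun k => ((m+1).choose k : ℝ) * (r + k) ^ ((k : ℤ) - 1 + p)
      * (s - k) ^ (((m+1:ℕ) : ℤ) - k + q) * x ^ k) (m+1)]
  -- extend the shifted a(m+1)(r,s)-sum to range (m+2)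
  have hC : (∑ k ∈ Finset.range (m+1),
      ((m+1).choose (k+1) : ℝ) * (r + ↑(k+1)) ^ (((k+1:ℕ) : ℤ) - 1 + p)
        * (s - ↑(k+1)) ^ (((m+1:ℕ) : ℤ) - ↑(k+1) + q) * x ^ (k+1)) =
      ∑ k ∈ Finset.range (m+2),
      ((m+1).choose (k+1) : ℝ) * (r + ↑(k+1)) ^ (((k+1:ℕ) : ℤ) - 1 + p)
        * (s - ↑(k+1)) ^ (((m+1:ℕ) : ℤ) - ↑(k+1) + q) * x ^ (k+1) := by
    conv_rhs => rw [Finset.sum_range_succ]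
    simp [Nat.choose_eq_zero_of_lt]
  -- extend the a(m)(r+1,s-1)-sum to range (m+2)
  have hD : (∑ k ∈ Finset.range (m+1),
      (m.choose k : ℝ) * (r + 1 + k) ^ ((k : ℤ) - 1 + p)
        * (s - 1 - k) ^ (((m:ℕ) : ℤ) - k + q) * x ^ k) =
      ∑ k ∈ Finset.range (m+2),
      (m.choose k : ℝ) * (r + 1 + k) ^ ((k : ℤ) - 1 + p)
        * (s - 1 - k) ^ (((m:ℕ) : ℤ) - k + q) * x ^ k := by
    conv_rhs => rw [Finset.sum_range_succ]
    simp [Nat.choose_eq_zero_of_lt]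
  rw [hC, hD]
  -- the k = 0 terms match
  have h0eq : ((m + 2).choose 0 : ℝ) * (r + ((0:ℕ):ℝ)) ^ (((0:ℕ):ℤ) - 1 + p)
        * (s - ((0:ℕ):ℝ)) ^ (((m + 2 :ℕ):ℤ) - ((0:ℕ):ℤ) + q) * x ^ 0
      = s * (((m + 1).choose 0 : ℝ) * (r + ((0:ℕ):ℝ)) ^ (((0:ℕ):ℤ) - 1 + p)
        * (s - ((0:ℕ):ℝ)) ^ (((m + 1:ℕ):ℤ) - ((0:ℕ):ℤ) + q) * x ^ 0) := by
    have hpow : (s:ℝ) ^ ((m:ℤ) + 2 - 0 + q) = s * s ^ ((m:ℤ) + 1 - 0 + q) := by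
      rw [show (m:ℤ) + 2 - 0 + q = ((m:ℤ) + 1 - 0 + q) + 1 by ring, zpow_add_one₀ hs0]
      ring
    push_cast
    simp only [sub_zero] at *
    rw [hpow]
    simp [Nat.choose_zero_right]
    ring
  -- termwise identity
  have hterm : ∀ k ∈ Finset.range (m+2),
      ((m + 2).choose (k + 1) : ℝ) * (r + ((k+1:ℕ):ℝ)) ^ (((k+1:ℕ):ℤ) - 1 + p)
          * (s - ((k+1:ℕ):ℝ)) ^ (((m+2:ℕ):ℤ) - ((k+1:ℕ):ℤ) + q) * x ^ (k + 1)
        = (((m+2:ℕ):ℝ) * x + r * x) *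
            (((m + 1).choose k : ℝ) * (r + 1 + (k:ℝ)) ^ ((k:ℤ) - 1 + p)
              * (s - 1 - (k:ℝ)) ^ (((m+1:ℕ):ℤ) - (k:ℤ) + q) * x ^ k)
          + s * (((m + 1).choose (k+1) : ℝ) * (r + ((k+1:ℕ):ℝ)) ^ (((k+1:ℕ):ℤ) - 1 + p)
              * (s - ((k+1:ℕ):ℝ)) ^ (((m+1:ℕ):ℤ) - ((k+1:ℕ):ℤ) + q) * x ^ (k + 1))
          + (-((m+2:ℕ):ℝ) * r * x - ((m+2:ℕ):ℝ) * s * x + r * x + s * x) *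
            ((m.choose k : ℝ) * (r + 1 + (k:ℝ)) ^ ((k:ℤ) - 1 + p)
              * (s - 1 - (k:ℝ)) ^ (((m:ℕ):ℤ) - (k:ℤ) + q) * x ^ k) := by
    intro k hk
    rw [Finset.mem_range] at hk
    have hu : r + ((k:ℝ) + 1) ≠ 0 := by
      have := hr (k+1) (by omega); push_cast at this; convert this using 2
    have hv : s - ((k:ℝ) + 1) ≠ 0 := by
      have := hs (k+1) (by omega); push_cast at this; convert this using 2
    push_cast
    rw [show r + 1 + (k:ℝ) = r + ((k:ℝ) + 1) by ring,
        show s - 1 - (k:ℝ) = s - ((k:ℝ) + 1) by ring,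
        show (k:ℤ) + 1 - 1 + p = ((k:ℤ) - 1 + p) + 1 by ring,
        show (m:ℤ) + 2 - ((k:ℤ) + 1) + q = ((m:ℤ) - (k:ℤ) + q) + 1 by ring,
        show (m:ℤ) + 1 - (k:ℤ) + q = ((m:ℤ) - (k:ℤ) + q) + 1 by ring,
        show (m:ℤ) + 1 - ((k:ℤ) + 1) + q = (m:ℤ) - (k:ℤ) + q by ring,
        zpow_add_one₀ hu, zpow_add_one₀ hv]
    have key := choose_identity_abel m k (by omega) r s
    push_cast at key
    linear_combination ((r + ((k:ℝ) + 1)) ^ ((k:ℤ) - 1 + p)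
      * (s - ((k:ℝ) + 1)) ^ ((m:ℤ) - (k:ℤ) + q) * x ^ (k+1)) * key
  rw [Finset.sum_congr rfl hterm, h0eq]
  rw [Finset.sum_add_distrib, Finset.sum_add_distrib,
    ← Finset.mul_sum, ← Finset.mul_sum, ← Finset.mul_sum]
  ring
end

section
/- Let p, q be integers, x a real number, and r, s real numbers such that r + j ≠ 0 and s - j ≠ 0 for every integer j with 0 ≤ j ≤ n+1 (for the relevant n). Define a(n)(r,s) := ∑_{k=0}^{n} (1/(k!^2 · (n-k)!))·(r+k)^{k-1+p}·(s-k)^{n-k+q}·x^k, with all powers taken as integer powers in ℝ. Then for every n ≥ 3: n²·(n-1-s)·a(n)(r,s) = x·(n+r)·(n-1-s)·a(n-1)(r+1,s-1) + (2n² - 2ns - 2n + s)·s·a(n-1)(r,s) - (n² + 2nr - 2rs - s² - n - r)·x·a(n-2)(r+1,s-1) - (n-s)·s²·a(n-2)(r,s) + (nr + ns - rs - s²)·x·a(n-3)(r+1,s-1). -/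
/-- The Abel-type sum `a_n(r,s) = ∑_{k=0}^n (r+k)^{k-1+p} (s-k)^{n-k+q} x^k / (k!² (n-k)!)`,
with integer powers. -/
noncomputable def abelTypeSum' (p q : ℤ) (x : ℝ) (n : ℕ) (r s : ℝ) : ℝ :=
  ∑ k ∈ Finset.range (n + 1),
    (1 / ((k.factorial : ℝ) ^ 2 * ((n - k).factorial : ℝ))) *
      (r + k) ^ ((k : ℤ) - 1 + p) * (s - k) ^ ((n : ℤ) - k + q) * x ^ k

lemma sum_ext' {M N : ℕ} (h : M ≤ N) (T : ℕ → ℝ) :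
    ∑ k ∈ Finset.range M, T k = ∑ j ∈ Finset.range N, if j < M then T j else 0 := by
  rw [show Finset.range M = (Finset.range N).filter (· < M) by
    ext j; simp [Finset.mem_filter, Finset.mem_range]; omega, Finset.sum_filter]

lemma sum_shift' {M N : ℕ} (h : M + 1 ≤ N) (T : ℕ → ℝ) :
    ∑ k ∈ Finset.range M, T k
      = ∑ j ∈ Finset.range N, if 1 ≤ j ∧ j ≤ M then T (j - 1) else 0 := by
  have h1 : ∑ j ∈ Finset.range (M + 1), (if 1 ≤ j ∧ j ≤ M then T (j - 1) else 0)
      = ∑ k ∈ Finset.range M, T k := by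
    rw [Finset.sum_range_succ']
    have : ∀ k ∈ Finset.range M,
        (if 1 ≤ k + 1 ∧ k + 1 ≤ M then T (k + 1 - 1) else 0) = T k := by
      intro k hk
      simp only [Finset.mem_range] at hk
      rw [if_pos ⟨by omega, by omega⟩, Nat.add_sub_cancel]
    rw [Finset.sum_congr rfl this]
    simp
  rw [← h1]
  exact Finset.sum_subset (Finset.range_subset_range.mpr h)
    (fun j _ hj => by
      simp only [Finset.mem_range] at hj
      rw [if_neg (by omega)])

set_option maxHeartbeats 2000000 in
/-- The functional recurrence produced by the Majewicz–Celine algorithm for the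
Abel-type sum with hypergeometric factor `x^k/(k!² (n-k)!)` (in denominator-cleared
form): for `n ≥ 3`,
`n²(n-1-s) a_n(r,s) = x(n+r)(n-1-s) a_{n-1}(r+1,s-1) + (2n²-2ns-2n+s)s a_{n-1}(r,s)
  - (n²+2nr-2rs-s²-n-r)x a_{n-2}(r+1,s-1) - (n-s)s² a_{n-2}(r,s)
  + (nr+ns-rs-s²)x a_{n-3}(r+1,s-1)`. -/
theorem abelTypeSum'_recurrence (p q : ℤ) (x r s : ℝ) (n : ℕ) (hn : 3 ≤ n)
    (hr : ∀ j : ℕ, j ≤ n + 1 → r + j ≠ 0) (hs : ∀ j : ℕ, j ≤ n + 1 → s - j ≠ 0) :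
    (n : ℝ) ^ 2 * ((n : ℝ) - 1 - s) * abelTypeSum' p q x n r s =
      x * ((n : ℝ) + r) * ((n : ℝ) - 1 - s) * abelTypeSum' p q x (n - 1) (r + 1) (s - 1)
        + (2 * (n : ℝ) ^ 2 - 2 * n * s - 2 * n + s) * s * abelTypeSum' p q x (n - 1) r s
        - ((n : ℝ) ^ 2 + 2 * n * r - 2 * r * s - s ^ 2 - n - r) * x *
          abelTypeSum' p q x (n - 2) (r + 1) (s - 1)
        - ((n : ℝ) - s) * s ^ 2 * abelTypeSum' p q x (n - 2) r s
        + ((n : ℝ) * r + n * s - r * s - s ^ 2) * x *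
          abelTypeSum' p q x (n - 3) (r + 1) (s - 1) := by
  obtain ⟨m, rfl⟩ : ∃ m, n = m + 3 := ⟨n - 3, by omega⟩
  rw [show m + 3 - 1 = m + 2 by omega, show m + 3 - 2 = m + 1 by omega,
    show m + 3 - 3 = m by omega]
  simp only [abelTypeSum']
  have e1 : (∑ k ∈ Finset.range (m + 2 + 1),
        (1 / ((k.factorial : ℝ) ^ 2 * ((m + 2 - k).factorial : ℝ))) *
          (r + 1 + (k : ℝ)) ^ ((k : ℤ) - 1 + p) *
          (s - 1 - (k : ℝ)) ^ (((m + 2 : ℕ) : ℤ) - (k : ℤ) + q) * x ^ k)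
      = ∑ j ∈ Finset.range (m + 4),
        (if 1 ≤ j ∧ j ≤ m + 2 + 1 then
          (1 / (((j - 1).factorial : ℝ) ^ 2 * ((m + 2 - (j - 1)).factorial : ℝ))) *
            (r + 1 + ((j - 1 : ℕ) : ℝ)) ^ (((j - 1 : ℕ) : ℤ) - 1 + p) *
            (s - 1 - ((j - 1 : ℕ) : ℝ)) ^ (((m + 2 : ℕ) : ℤ) - ((j - 1 : ℕ) : ℤ) + q) *
            x ^ (j - 1)
        else 0) :=
    sum_shift' (by omega) _
  have e2 : (∑ k ∈ Finset.range (m + 2 + 1),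
        (1 / ((k.factorial : ℝ) ^ 2 * ((m + 2 - k).factorial : ℝ))) *
          (r + (k : ℝ)) ^ ((k : ℤ) - 1 + p) *
          (s - (k : ℝ)) ^ (((m + 2 : ℕ) : ℤ) - (k : ℤ) + q) * x ^ k)
      = ∑ j ∈ Finset.range (m + 4),
        (if j < m + 2 + 1 then
          (1 / ((j.factorial : ℝ) ^ 2 * ((m + 2 - j).factorial : ℝ))) *
            (r + (j : ℝ)) ^ ((j : ℤ) - 1 + p) *
            (s - (j : ℝ)) ^ (((m + 2 : ℕ) : ℤ) - (j : ℤ) + q) * x ^ j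
        else 0) :=
    sum_ext' (by omega) _
  have e3 : (∑ k ∈ Finset.range (m + 1 + 1),
        (1 / ((k.factorial : ℝ) ^ 2 * ((m + 1 - k).factorial : ℝ))) *
          (r + 1 + (k : ℝ)) ^ ((k : ℤ) - 1 + p) *
          (s - 1 - (k : ℝ)) ^ (((m + 1 : ℕ) : ℤ) - (k : ℤ) + q) * x ^ k)
      = ∑ j ∈ Finset.range (m + 4),
        (if 1 ≤ j ∧ j ≤ m + 1 + 1 then
          (1 / (((j - 1).factorial : ℝ) ^ 2 * ((m + 1 - (j - 1)).factorial : ℝ))) *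
            (r + 1 + ((j - 1 : ℕ) : ℝ)) ^ (((j - 1 : ℕ) : ℤ) - 1 + p) *
            (s - 1 - ((j - 1 : ℕ) : ℝ)) ^ (((m + 1 : ℕ) : ℤ) - ((j - 1 : ℕ) : ℤ) + q) *
            x ^ (j - 1)
        else 0) :=
    sum_shift' (by omega) _
  have e4 : (∑ k ∈ Finset.range (m + 1 + 1),
        (1 / ((k.factorial : ℝ) ^ 2 * ((m + 1 - k).factorial : ℝ))) *
          (r + (k : ℝ)) ^ ((k : ℤ) - 1 + p) *
          (s - (k : ℝ)) ^ (((m + 1 : ℕ) : ℤ) - (k : ℤ) + q) * x ^ k)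
      = ∑ j ∈ Finset.range (m + 4),
        (if j < m + 1 + 1 then
          (1 / ((j.factorial : ℝ) ^ 2 * ((m + 1 - j).factorial : ℝ))) *
            (r + (j : ℝ)) ^ ((j : ℤ) - 1 + p) *
            (s - (j : ℝ)) ^ (((m + 1 : ℕ) : ℤ) - (j : ℤ) + q) * x ^ j
        else 0) :=
    sum_ext' (by omega) _
  have e5 : (∑ k ∈ Finset.range (m + 1),
        (1 / ((k.factorial : ℝ) ^ 2 * ((m - k).factorial : ℝ))) *
          (r + 1 + (k : ℝ)) ^ ((k : ℤ) - 1 + p) *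
          (s - 1 - (k : ℝ)) ^ (((m : ℕ) : ℤ) - (k : ℤ) + q) * x ^ k)
      = ∑ j ∈ Finset.range (m + 4),
        (if 1 ≤ j ∧ j ≤ m + 1 then
          (1 / (((j - 1).factorial : ℝ) ^ 2 * ((m - (j - 1)).factorial : ℝ))) *
            (r + 1 + ((j - 1 : ℕ) : ℝ)) ^ (((j - 1 : ℕ) : ℤ) - 1 + p) *
            (s - 1 - ((j - 1 : ℕ) : ℝ)) ^ (((m : ℕ) : ℤ) - ((j - 1 : ℕ) : ℤ) + q) *
            x ^ (j - 1)
        else 0) :=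
    sum_shift' (by omega) _
  rw [e1, e2, e3, e4, e5, show m + 3 + 1 = m + 4 by omega]
  simp only [Finset.mul_sum]
  rw [← Finset.sum_add_distrib, ← Finset.sum_sub_distrib, ← Finset.sum_sub_distrib,
    ← Finset.sum_add_distrib]
  refine Finset.sum_congr rfl fun j hj => ?_
  simp only [Finset.mem_range] at hj
  by_cases hj0 : j = 0
  · subst hj0
    rw [if_neg (show ¬(1 ≤ 0 ∧ 0 ≤ m + 2 + 1) by omega),
        if_pos (show 0 < m + 2 + 1 by omega),
        if_neg (show ¬(1 ≤ 0 ∧ 0 ≤ m + 1 + 1) by omega),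
        if_pos (show 0 < m + 1 + 1 by omega),
        if_neg (show ¬(1 ≤ 0 ∧ 0 ≤ m + 1) by omega)]
    rw [Nat.sub_zero, Nat.sub_zero, Nat.sub_zero]
    have f2 : (((m + 2).factorial : ℝ)) = ((m : ℝ) + 2) * (((m + 1).factorial : ℝ)) := by
      rw [show m + 2 = m + 1 + 1 by omega, Nat.factorial_succ]; push_cast; ring
    have f3 : (((m + 3).factorial : ℝ)) = ((m : ℝ) + 3) * (((m : ℝ) + 2) * (((m + 1).factorial : ℝ))) := by
      rw [show m + 3 = m + 2 + 1 by omega, Nat.factorial_succ,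
        show m + 2 = m + 1 + 1 by omega, Nat.factorial_succ]
      push_cast; ring
    have hv : s - ((0 : ℕ) : ℝ) ≠ 0 := hs 0 (by omega)
    have hf : (((m + 1).factorial : ℝ)) ≠ 0 := by exact_mod_cast (m + 1).factorial_ne_zero
    have h2 : ((m : ℝ) + 2) ≠ 0 := by positivity
    have h3 : ((m : ℝ) + 3) ≠ 0 := by positivity
    rw [f3, f2]
    rw [show ((m + 3 : ℕ) : ℤ) - ((0 : ℕ) : ℤ) + q = ((((m + 1 : ℕ) : ℤ) - ((0 : ℕ) : ℤ) + q) + 1) + 1 by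
          push_cast; ring,
        show ((m + 2 : ℕ) : ℤ) - ((0 : ℕ) : ℤ) + q = (((m + 1 : ℕ) : ℤ) - ((0 : ℕ) : ℤ) + q) + 1 by
          push_cast; ring]
    simp only [zpow_add_one₀ hv, Nat.factorial_zero]
    push_cast
    field_simp
    ring
  · obtain ⟨i, rfl⟩ : ∃ i, j = i + 1 := ⟨j - 1, by omega⟩
    by_cases him : i ≤ m
    · obtain ⟨d, rfl⟩ : ∃ d, m = i + d := ⟨m - i, by omega⟩
      simp only [Nat.add_sub_cancel]
      rw [if_pos (show 1 ≤ i + 1 ∧ i + 1 ≤ i + d + 2 + 1 by omega),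
          if_pos (show i + 1 < i + d + 2 + 1 by omega),
          if_pos (show 1 ≤ i + 1 ∧ i + 1 ≤ i + d + 1 + 1 by omega),
          if_pos (show i + 1 < i + d + 1 + 1 by omega),
          if_pos (show 1 ≤ i + 1 ∧ i + 1 ≤ i + d + 1 by omega)]
      rw [show i + d + 3 - (i + 1) = d + 2 by omega, show i + d + 2 - i = d + 2 by omega,
          show i + d + 2 - (i + 1) = d + 1 by omega, show i + d + 1 - i = d + 1 by omega,
          show i + d + 1 - (i + 1) = d by omega, show i + d - i = d by omega]
      have fi1 : (((i + 1).factorial : ℝ)) = ((i : ℝ) + 1) * (i.factorial : ℝ) := by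
        rw [Nat.factorial_succ]; push_cast; ring
      have fd1 : (((d + 1).factorial : ℝ)) = ((d : ℝ) + 1) * (d.factorial : ℝ) := by
        rw [Nat.factorial_succ]; push_cast; ring
      have fd2 : (((d + 2).factorial : ℝ)) = ((d : ℝ) + 2) * (((d : ℝ) + 1) * (d.factorial : ℝ)) := by
        rw [show d + 2 = d + 1 + 1 by omega, Nat.factorial_succ, Nat.factorial_succ]
        push_cast; ring
      have hu : r + ((i : ℝ) + 1) ≠ 0 := by
        have := hr (i + 1) (by omega); push_cast at this; exact this
      have hv : s - ((i : ℝ) + 1) ≠ 0 := by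
        have := hs (i + 1) (by omega); push_cast at this; exact this
      have hfi : (i.factorial : ℝ) ≠ 0 := by exact_mod_cast i.factorial_ne_zero
      have hfd : (d.factorial : ℝ) ≠ 0 := by exact_mod_cast d.factorial_ne_zero
      have h1 : ((i : ℝ) + 1) ≠ 0 := by positivity
      have h2 : ((d : ℝ) + 1) ≠ 0 := by positivity
      have h3 : ((d : ℝ) + 2) ≠ 0 := by positivity
      rw [fi1, fd1, fd2]
      push_cast
      rw [show r + 1 + (i : ℝ) = r + ((i : ℝ) + 1) by ring,
          show s - 1 - (i : ℝ) = s - ((i : ℝ) + 1) by ring]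
      rw [show (i : ℤ) + 1 - 1 + p = ((i : ℤ) - 1 + p) + 1 by ring,
          show (i : ℤ) + (d : ℤ) + 3 - ((i : ℤ) + 1) + q = (((d : ℤ) + q) + 1) + 1 by ring,
          show (i : ℤ) + (d : ℤ) + 2 - (i : ℤ) + q = (((d : ℤ) + q) + 1) + 1 by ring,
          show (i : ℤ) + (d : ℤ) + 2 - ((i : ℤ) + 1) + q = ((d : ℤ) + q) + 1 by ring,
          show (i : ℤ) + (d : ℤ) + 1 - (i : ℤ) + q = ((d : ℤ) + q) + 1 by ring,
          show (i : ℤ) + (d : ℤ) + 1 - ((i : ℤ) + 1) + q = (d : ℤ) + q by ring,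
          show (i : ℤ) + (d : ℤ) - (i : ℤ) + q = (d : ℤ) + q by ring]
      simp only [zpow_add_one₀ hu, zpow_add_one₀ hv]
      field_simp
      ring
    · have : i = m + 1 ∨ i = m + 2 := by omega
      rcases this with h | h <;> subst h
      · simp only [Nat.add_sub_cancel]
        rw [if_pos (show 1 ≤ m + 1 + 1 ∧ m + 1 + 1 ≤ m + 2 + 1 by omega),
            if_pos (show m + 1 + 1 < m + 2 + 1 by omega),
            if_pos (show 1 ≤ m + 1 + 1 ∧ m + 1 + 1 ≤ m + 1 + 1 by omega),
            if_neg (show ¬(m + 1 + 1 < m + 1 + 1) by omega),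
            if_neg (show ¬(1 ≤ m + 1 + 1 ∧ m + 1 + 1 ≤ m + 1) by omega)]
        rw [show m + 3 - (m + 1 + 1) = 1 by omega, show m + 2 - (m + 1) = 1 by omega,
            show m + 2 - (m + 1 + 1) = 0 by omega, show m + 1 - (m + 1) = 0 by omega]
        have fm2 : (((m + 1 + 1).factorial : ℝ)) = ((m : ℝ) + 2) * (((m + 1).factorial : ℝ)) := by
          rw [Nat.factorial_succ]; push_cast; ring
        have hu : r + ((m : ℝ) + 2) ≠ 0 := by
          have := hr (m + 2) (by omega); push_cast at this; exact this
        have hv : s - ((m : ℝ) + 2) ≠ 0 := by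
          have := hs (m + 2) (by omega); push_cast at this; exact this
        have hf : (((m + 1).factorial : ℝ)) ≠ 0 := by exact_mod_cast (m + 1).factorial_ne_zero
        have h2 : ((m : ℝ) + 2) ≠ 0 := by positivity
        rw [fm2]
        simp only [Nat.factorial_one, Nat.factorial_zero]
        push_cast
        rw [show (m : ℝ) + 1 + 1 = (m : ℝ) + 2 by ring,
            show r + 1 + ((m : ℝ) + 1) = r + ((m : ℝ) + 2) by ring,
            show s - 1 - ((m : ℝ) + 1) = s - ((m : ℝ) + 2) by ring]
        rw [show (m : ℤ) + 1 - 1 + p = (m : ℤ) + p by ring,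
            show (m : ℤ) + 1 + 1 - 1 + p = ((m : ℤ) + p) + 1 by ring,
            show (m : ℤ) + 3 - ((m : ℤ) + 1 + 1) + q = q + 1 by ring,
            show (m : ℤ) + 2 - ((m : ℤ) + 1) + q = q + 1 by ring,
            show (m : ℤ) + 2 - ((m : ℤ) + 1 + 1) + q = q by ring,
            show (m : ℤ) + 1 - ((m : ℤ) + 1) + q = q by ring]
        simp only [zpow_add_one₀ hu, zpow_add_one₀ hv]
        field_simp
        ring
      · simp only [Nat.add_sub_cancel]
        rw [if_pos (show 1 ≤ m + 2 + 1 ∧ m + 2 + 1 ≤ m + 2 + 1 by omega),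
            if_neg (show ¬(m + 2 + 1 < m + 2 + 1) by omega),
            if_neg (show ¬(1 ≤ m + 2 + 1 ∧ m + 2 + 1 ≤ m + 1 + 1) by omega),
            if_neg (show ¬(m + 2 + 1 < m + 1 + 1) by omega),
            if_neg (show ¬(1 ≤ m + 2 + 1 ∧ m + 2 + 1 ≤ m + 1) by omega)]
        rw [show m + 3 - (m + 2 + 1) = 0 by omega, show m + 2 - (m + 2) = 0 by omega]
        have fm3 : (((m + 2 + 1).factorial : ℝ)) = ((m : ℝ) + 3) * (((m + 2).factorial : ℝ)) := by
          rw [Nat.factorial_succ]; push_cast; ring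
        have hu : r + ((m : ℝ) + 3) ≠ 0 := by
          have := hr (m + 3) (by omega); push_cast at this; exact this
        have hf : (((m + 2).factorial : ℝ)) ≠ 0 := by exact_mod_cast (m + 2).factorial_ne_zero
        have h3 : ((m : ℝ) + 3) ≠ 0 := by positivity
        rw [fm3]
        simp only [Nat.factorial_zero]
        push_cast
        rw [show (m : ℝ) + 2 + 1 = (m : ℝ) + 3 by ring,
            show r + 1 + ((m : ℝ) + 2) = r + ((m : ℝ) + 3) by ring,
            show s - 1 - ((m : ℝ) + 2) = s - ((m : ℝ) + 3) by ring]
        rw [show (m : ℤ) + 2 - 1 + p = (m : ℤ) + 1 + p by ring,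
            show (m : ℤ) + 2 + 1 - 1 + p = ((m : ℤ) + 1 + p) + 1 by ring,
            show (m : ℤ) + 3 - ((m : ℤ) + 2 + 1) + q = q by ring,
            show (m : ℤ) + 2 - ((m : ℤ) + 2) + q = q by ring]
        simp only [zpow_add_one₀ hu]
        field_simp
        ring
end

section
/- Let p, q be natural numbers with p ≥ 1, let x be a real number, and define for natural numbers n and real r, s: a(n)(r,s) := ∑_{k=0}^{n} C(n,k)·(r+k)^{k-1+p}·(s-k)^{n-k+q}·x^k (all exponents here are nonnegative integers). Then for every n: -(p·n + n·s - n + p + s - 1)·a(n)(r,s) + (n·r + n·s + r + s)·(∂/∂r) a(n)(r,s) + (n+p)·a(n+1)(r,s) - (n + r + 1)·(∂/∂r) a(n+1)(r,s) = 0. -/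
/-- The Abel-type sum `a_n(r,s) = ∑_{k=0}^n C(n,k) (r+k)^{k-1+p} (s-k)^{n-k+q} x^k`
for natural `p ≥ 1`, `q`, so all exponents are nonnegative integers (the exponent
`k - 1 + p` is written `k + p - 1`, which agrees since `p ≥ 1`). -/
noncomputable def abelPolySum (p q : ℕ) (x : ℝ) (n : ℕ) (r s : ℝ) : ℝ :=
  ∑ k ∈ Finset.range (n + 1),
    (n.choose k : ℝ) * (r + k) ^ (k + p - 1) * (s - k) ^ (n - k + q) * x ^ k

private lemma hasDerivAt_term' (A B c : ℝ) (m : ℕ) (r : ℝ) :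
    HasDerivAt (fun r' : ℝ => A * (r' + c) ^ m * B)
      (A * ((m : ℝ) * (r + c) ^ (m - 1)) * B) r := by
  have h : HasDerivAt (fun r' : ℝ => (r' + c) ^ m) ((m : ℝ) * (r + c) ^ (m - 1)) r := by
    simpa using ((hasDerivAt_id r).add_const c).fun_pow m
  exact (h.const_mul A).mul_const B

private lemma hasDerivAt_abel' (p q : ℕ) (x : ℝ) (n : ℕ) (s r : ℝ) :
    HasDerivAt (fun r' => abelPolySum p q x n r' s)
      (∑ k ∈ Finset.range (n+1),
        (n.choose k : ℝ) * (((k+p-1 : ℕ) : ℝ) * (r + k) ^ (k+p-1-1))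
          * ((s - k) ^ (n-k+q) * x ^ k)) r := by
  unfold abelPolySum
  refine HasDerivAt.fun_sum fun k _ => ?_
  have h := hasDerivAt_term' (n.choose k : ℝ) ((s - (k:ℝ)) ^ (n-k+q) * x ^ k) (k:ℝ) (k+p-1) r
  convert h using 2 with r'
  · rfl
  · rfl
  ring

private lemma pascal_sum' (n : ℕ) (f : ℕ → ℝ) :
    ∑ k ∈ Finset.range (n+2), ((n+1).choose k : ℝ) * f k
      = ∑ k ∈ Finset.range (n+1), (n.choose k : ℝ) * f k
        + ∑ k ∈ Finset.range (n+1), (n.choose k : ℝ) * f (k+1) := by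
  rw [Finset.sum_range_succ' (fun k => ((n+1).choose k : ℝ) * f k) (n+1)]
  have key : ∑ i ∈ Finset.range (n+1), ((n+1).choose (i+1) : ℝ) * f (i+1)
      = ∑ i ∈ Finset.range (n+1), (n.choose i : ℝ) * f (i+1)
        + ∑ i ∈ Finset.range (n+1), (n.choose (i+1) : ℝ) * f (i+1) := by
    rw [← Finset.sum_add_distrib]
    refine Finset.sum_congr rfl fun i _ => ?_
    rw [Nat.choose_succ_succ]
    push_cast
    ring
  rw [key]
  have h2 : ∑ k ∈ Finset.range (n+1), (n.choose k : ℝ) * f k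
      = (∑ i ∈ Finset.range n, (n.choose (i+1) : ℝ) * f (i+1)) + (n.choose 0 : ℝ) * f 0 := by
    rw [Finset.sum_range_succ' (fun k => (n.choose k : ℝ) * f k) n]
  have h3 : ∑ i ∈ Finset.range (n+1), (n.choose (i+1) : ℝ) * f (i+1)
      = ∑ i ∈ Finset.range n, (n.choose (i+1) : ℝ) * f (i+1) := by
    rw [Finset.sum_range_succ]
    simp
  rw [h2, h3]
  simp
  ring

private lemma shift_sum' (n : ℕ) (F : ℕ → ℝ) (h0 : F 0 = 0) (hn : F (n+1) = 0) :
    ∑ k ∈ Finset.range (n+1), F (k+1) = ∑ k ∈ Finset.range (n+1), F k := by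
  have h1 := Finset.sum_range_succ' F (n+1)
  have h2 := Finset.sum_range_succ F (n+1)
  rw [h2] at h1
  linarith

/-- The telescoping correction term. -/
private def Fterm (p q n : ℕ) (x r s : ℝ) (j : ℕ) : ℝ :=
  (r + 1 - (p:ℝ)) * (j:ℝ) * (n.choose j : ℝ)
    * (r + (j:ℝ)) ^ (j+p-1-1) * ((s - (j:ℝ)) ^ (n+1-j+q) * x ^ j)

/-- The first recurrence-differential equation (in `r`) for the Abel-type sum with
binomial summand:
`-(pn + ns - n + p + s - 1) aₙ + (nr + ns + r + s) ∂aₙ/∂r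
  + (n+p) aₙ₊₁ - (n + r + 1) ∂aₙ₊₁/∂r = 0`. -/
theorem abelPolySum_diff_recurrence_r (p q : ℕ) (hp : 1 ≤ p) (x : ℝ) (n : ℕ) (r s : ℝ) :
    -((p : ℝ) * n + n * s - n + p + s - 1) * abelPolySum p q x n r s
        + ((n : ℝ) * r + n * s + r + s) * deriv (fun r' => abelPolySum p q x n r' s) r
        + ((n : ℝ) + p) * abelPolySum p q x (n + 1) r s
        - ((n : ℝ) + r + 1) * deriv (fun r' => abelPolySum p q x (n + 1) r' s) r = 0 := by
  rw [(hasDerivAt_abel' p q x n s r).deriv, (hasDerivAt_abel' p q x (n+1) s r).deriv]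
  have hA : abelPolySum p q x (n+1) r s
      = (∑ k ∈ Finset.range (n+1), (n.choose k : ℝ)
          * ((r+(k:ℝ))^(k+p-1) * ((s-(k:ℝ))^(n+1-k+q) * x^k)))
        + ∑ k ∈ Finset.range (n+1), (n.choose k : ℝ)
          * ((r+((k+1:ℕ):ℝ))^((k+1)+p-1) * ((s-((k+1:ℕ):ℝ))^(n+1-(k+1)+q) * x^(k+1))) := by
    unfold abelPolySum
    rw [show n+1+1 = n+2 from rfl,
      ← pascal_sum' n (fun k => (r+(k:ℝ))^(k+p-1) * ((s-(k:ℝ))^(n+1-k+q) * x^k))]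
    exact Finset.sum_congr rfl fun k _ => by ring
  have hD : (∑ k ∈ Finset.range (n+1+1), ((n+1).choose k : ℝ)
        * (((k+p-1 : ℕ):ℝ) * (r+(k:ℝ))^(k+p-1-1)) * ((s-(k:ℝ))^(n+1-k+q) * x^k))
      = (∑ k ∈ Finset.range (n+1), (n.choose k : ℝ)
          * ((((k+p-1 : ℕ):ℝ) * (r+(k:ℝ))^(k+p-1-1)) * ((s-(k:ℝ))^(n+1-k+q) * x^k)))
        + ∑ k ∈ Finset.range (n+1), (n.choose k : ℝ)
          * (((((k+1)+p-1 : ℕ)):ℝ) * (r+((k+1:ℕ):ℝ))^((k+1)+p-1-1)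
            * ((s-((k+1:ℕ):ℝ))^(n+1-(k+1)+q) * x^(k+1))) := by
    rw [show n+1+1 = n+2 from rfl]
    rw [show (∑ k ∈ Finset.range (n+2), ((n+1).choose k : ℝ)
          * (((k+p-1 : ℕ):ℝ) * (r+(k:ℝ))^(k+p-1-1)) * ((s-(k:ℝ))^(n+1-k+q) * x^k))
        = ∑ k ∈ Finset.range (n+2), ((n+1).choose k : ℝ)
          * ((((k+p-1 : ℕ):ℝ) * (r+(k:ℝ))^(k+p-1-1)) * ((s-(k:ℝ))^(n+1-k+q) * x^k))
      from Finset.sum_congr rfl fun k _ => by ring]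
    rw [pascal_sum' n (fun k => ((((k+p-1 : ℕ):ℝ) * (r+(k:ℝ))^(k+p-1-1))
        * ((s-(k:ℝ))^(n+1-k+q) * x^k)))]
  rw [hA, hD]
  have hF0 : Fterm p q n x r s 0 = 0 := by simp [Fterm]
  have hFn : Fterm p q n x r s (n+1) = 0 := by simp [Fterm]
  have hsecond : ((n:ℝ)+p) * (∑ k ∈ Finset.range (n+1), (n.choose k:ℝ)
        * ((r+((k+1:ℕ):ℝ))^((k+1)+p-1) * ((s-((k+1:ℕ):ℝ))^(n+1-(k+1)+q) * x^(k+1))))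
      - ((n:ℝ)+r+1) * (∑ k ∈ Finset.range (n+1), (n.choose k:ℝ)
        * (((((k+1)+p-1 : ℕ)):ℝ) * (r+((k+1:ℕ):ℝ))^((k+1)+p-1-1)
          * ((s-((k+1:ℕ):ℝ))^(n+1-(k+1)+q) * x^(k+1))))
      = ∑ k ∈ Finset.range (n+1), Fterm p q n x r s k := by
    rw [Finset.mul_sum, Finset.mul_sum, ← Finset.sum_sub_distrib,
      ← shift_sum' n (Fterm p q n x r s) hF0 hFn]
    refine Finset.sum_congr rfl fun k hk => ?_
    have hk' : k ≤ n := Nat.lt_succ_iff.mp (Finset.mem_range.mp hk)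
    have e1 : (k+1)+p-1 = (k+p-1)+1 := by omega
    have e2 : (k+1)+p-1-1 = k+p-1 := by omega
    have e3 : n+1-(k+1)+q = n-k+q := by omega
    have hch : ((n.choose (k+1) : ℝ)) * ((k:ℝ)+1) = (n.choose k : ℝ) * ((n:ℝ)-(k:ℝ)) := by
      have h' := congrArg (Nat.cast : ℕ → ℝ) (Nat.choose_succ_right_eq n k)
      push_cast [Nat.cast_sub hk'] at h'
      linarith
    have hc2 : ((k+p-1:ℕ):ℝ) = (k:ℝ)+(p:ℝ)-1 := by
      rw [Nat.cast_sub (by omega : 1 ≤ k+p)]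
      push_cast
      ring
    simp only [Fterm, e1, e2, e3]
    push_cast [hc2]
    linear_combination (-(r+1-(p:ℝ)) * ((r+(k:ℝ)+1)^(k+p-1))
      * ((s-((k:ℝ)+1))^(n-k+q) * x^(k+1))) * hch
  have hmain : -((p : ℝ) * n + n * s - n + p + s - 1) * abelPolySum p q x n r s
      + ((n : ℝ) * r + n * s + r + s) * (∑ k ∈ Finset.range (n+1),
          (n.choose k : ℝ) * (((k+p-1 : ℕ) : ℝ) * (r + k) ^ (k+p-1-1))
            * ((s - k) ^ (n-k+q) * x ^ k))
      + ((n:ℝ)+p) * (∑ k ∈ Finset.range (n+1), (n.choose k : ℝ)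
          * ((r+(k:ℝ))^(k+p-1) * ((s-(k:ℝ))^(n+1-k+q) * x^k)))
      - ((n:ℝ)+r+1) * (∑ k ∈ Finset.range (n+1), (n.choose k : ℝ)
          * ((((k+p-1 : ℕ):ℝ) * (r+(k:ℝ))^(k+p-1-1)) * ((s-(k:ℝ))^(n+1-k+q) * x^k)))
      + (∑ k ∈ Finset.range (n+1), Fterm p q n x r s k) = 0 := by
    unfold abelPolySum
    simp only [Finset.mul_sum]
    rw [← Finset.sum_add_distrib, ← Finset.sum_add_distrib, ← Finset.sum_sub_distrib,
      ← Finset.sum_add_distrib]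
    refine Finset.sum_eq_zero fun k hk => ?_
    have hk' : k ≤ n := Nat.lt_succ_iff.mp (Finset.mem_range.mp hk)
    have he : n+1-k+q = (n-k+q)+1 := by omega
    simp only [Fterm, he]
    by_cases h0 : k + p - 1 = 0
    · have hk0 : k = 0 := by omega
      have hp1 : p = 1 := by omega
      subst hk0 hp1
      simp
      ring
    · obtain ⟨t, ht⟩ : ∃ t, k+p-1 = t+1 := ⟨k+p-1-1, by omega⟩
      have hc : (t:ℝ)+1 = (k:ℝ)+(p:ℝ)-1 := by
        have h' := congrArg (Nat.cast : ℕ → ℝ) ht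
        rw [Nat.cast_sub (by omega : 1 ≤ k+p)] at h'
        push_cast at h'
        linarith
      rw [ht]
      simp only [Nat.add_sub_cancel]
      push_cast
      linear_combination ((n.choose k : ℝ) * (r+(k:ℝ))^t * (s-(k:ℝ))^(n-k+q) * x^k
        * (((n:ℝ)*r+(n:ℝ)*s+r+s) - ((n:ℝ)+r+1)*(s-(k:ℝ)))) * hc
  linear_combination hmain + hsecond
end

section
/- Let p, q be natural numbers with p ≥ 1, let x be a real number, and define for natural numbers n and real r, s: a(n)(r,s) := ∑_{k=0}^{n} C(n,k)·(r+k)^{k-1+p}·(s-k)^{n-k+q}·x^k (all exponents here are nonnegative integers). Then for every n: -(n+1)·(q + n - s + 1)·a(n)(r,s) + q·a(n+1)(r,s) + (n - s + 1)·(∂/∂s) a(n+1)(r,s) = 0. -/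
/-- The second recurrence-differential equation (in `s`) for the Abel-type sum with
binomial summand:
`-(n+1)(q + n - s + 1) aₙ + q aₙ₊₁ + (n - s + 1) ∂aₙ₊₁/∂s = 0`. -/
theorem abelPolySum_diff_recurrence_s (p q : ℕ) (hp : 1 ≤ p) (x : ℝ) (n : ℕ) (r s : ℝ) :
    -((n : ℝ) + 1) * ((q : ℝ) + n - s + 1) * abelPolySum p q x n r s
        + (q : ℝ) * abelPolySum p q x (n + 1) r s
        + ((n : ℝ) - s + 1) * deriv (fun s' => abelPolySum p q x (n + 1) r s') s = 0 := by
  have key : ∀ k : ℕ, HasDerivAt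
      (fun s' : ℝ => (((n+1).choose k : ℝ)) * (r + k) ^ (k + p - 1) * (s' - k) ^ (n + 1 - k + q) * x ^ k)
      ((((n+1).choose k : ℝ)) * (r + k) ^ (k + p - 1) *
        (((n + 1 - k + q : ℕ) : ℝ) * (s - k) ^ (n + 1 - k + q - 1)) * x ^ k) s := by
    intro k
    have h1 : HasDerivAt (fun s' : ℝ => (s' - (k : ℝ)) ^ (n + 1 - k + q))
        (((n + 1 - k + q : ℕ) : ℝ) * (s - k) ^ (n + 1 - k + q - 1) * 1) s :=
      ((hasDerivAt_id s).sub_const _).pow _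
    simpa [mul_one] using (h1.const_mul ((((n+1).choose k : ℝ)) * (r + k) ^ (k + p - 1))).mul_const (x ^ k)
  have hD : deriv (fun s' => abelPolySum p q x (n + 1) r s') s
      = ∑ k ∈ Finset.range (n + 2),
          (((n+1).choose k : ℝ)) * (r + k) ^ (k + p - 1) *
            (((n + 1 - k + q : ℕ) : ℝ) * (s - k) ^ (n + 1 - k + q - 1)) * x ^ k := by
    have := (HasDerivAt.fun_sum (fun k (_ : k ∈ Finset.range (n + 2)) => key k)).deriv
    rw [← this]
    rfl
  have hext : abelPolySum p q x n r s = ∑ k ∈ Finset.range (n + 2),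
      (n.choose k : ℝ) * (r + k) ^ (k + p - 1) * (s - k) ^ (n - k + q) * x ^ k := by
    have h2 : (∑ k ∈ Finset.range (n + 2),
        (n.choose k : ℝ) * (r + k) ^ (k + p - 1) * (s - k) ^ (n - k + q) * x ^ k)
      = (∑ k ∈ Finset.range (n + 1),
        (n.choose k : ℝ) * (r + k) ^ (k + p - 1) * (s - k) ^ (n - k + q) * x ^ k)
        + (n.choose (n+1) : ℝ) * (r + (n+1 : ℕ)) ^ ((n+1) + p - 1) * (s - (n+1 : ℕ)) ^ (n - (n+1) + q) * x ^ (n+1) :=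
      Finset.sum_range_succ _ _
    rw [abelPolySum, h2, Nat.choose_succ_self]
    simp
  have hnext : abelPolySum p q x (n + 1) r s = ∑ k ∈ Finset.range (n + 2),
      ((n+1).choose k : ℝ) * (r + k) ^ (k + p - 1) * (s - k) ^ (n + 1 - k + q) * x ^ k := rfl
  rw [hD, hext, hnext, Finset.mul_sum, Finset.mul_sum, Finset.mul_sum,
    ← Finset.sum_add_distrib, ← Finset.sum_add_distrib]
  apply Finset.sum_eq_zero
  intro k hk
  have hk1 : k ≤ n + 1 := by
    have := Finset.mem_range.mp hk; omega
  by_cases hkn : k ≤ n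
  · have e1 : n + 1 - k + q = (n - k + q) + 1 := by omega
    rw [e1, Nat.add_sub_cancel]
    have hc : (((n+1).choose k : ℕ) : ℝ) * ((n : ℝ) + 1 - k) = ((n.choose k : ℕ) : ℝ) * ((n : ℝ) + 1) := by
      have h := Nat.choose_mul_succ_eq n k
      have hcast : ((n.choose k * (n + 1) : ℕ) : ℝ) = (((n + 1).choose k * (n + 1 - k) : ℕ) : ℝ) := by
        exact_mod_cast congrArg (fun m : ℕ => (m : ℝ)) h
      push_cast [Nat.cast_sub hk1] at hcast
      linarith
    push_cast [Nat.cast_sub hkn]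
    rw [pow_succ]
    linear_combination ((s - (k : ℝ)) ^ (n - k + q) * x ^ k * (r + (k : ℝ)) ^ (k + p - 1)
      * ((q : ℝ) + (n : ℝ) - s + 1)) * hc
  · have hk2 : k = n + 1 := by omega
    subst hk2
    have e0 : n - (n + 1) + q = q := by omega
    have e1 : n + 1 - (n + 1) + q = q := by omega
    rw [e0, e1, Nat.choose_succ_self]
    rcases q with _ | q'
    · simp
    · have e2 : q' + 1 - 1 = q' := rfl
      rw [e2, pow_succ]
      push_cast
      ring
end

section
/- For all nonnegative integers n and p, the number of pairs (f, A), where f : ℕ → ℕ satisfies f(i) < n for all i < n+p, f is arbitrary (say, equal to 0) on inputs ≥ n+p, and A is a subset of {0,1,…,n-1} such that f(a) ∈ A for all a ∈ A and f(b) ∉ A for all b ∈ ({0,…,n-1} \ A) ∪ {n,…,n+p-1}, equals ∑_{k=0}^{n} C(n,k) · k^k · (n-k)^{n-k+p}. -/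
noncomputable def kalaiEquiv (n p : ℕ) :
    {fA : (ℕ → ℕ) × Finset ℕ //
        (∀ i < n + p, fA.1 i < n) ∧ (∀ i, n + p ≤ i → fA.1 i = 0) ∧
        fA.2 ⊆ Finset.range n ∧
        (∀ a ∈ fA.2, fA.1 a ∈ fA.2) ∧
        (∀ b ∈ (Finset.range n \ fA.2) ∪ Finset.Ico n (n + p), fA.1 b ∉ fA.2)} ≃
    Σ A : ((Finset.range n).powerset : Finset (Finset ℕ)),
      {g // g ∈ (Finset.range (n + p)).pi
        (fun i => if i ∈ A.1 then A.1 else Finset.range n \ A.1)} where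
  toFun x := ⟨⟨x.1.2, Finset.mem_powerset.2 x.2.2.2.1⟩,
    ⟨fun i _ => x.1.1 i, by
      obtain ⟨⟨f, A⟩, h1, h2, h3, h4, h5⟩ := x
      simp only [Finset.mem_pi]
      intro i hi
      rw [Finset.mem_range] at hi
      by_cases hA : i ∈ A
      · simp [hA, h4 i hA]
      · simp only [hA, if_false, Finset.mem_sdiff, Finset.mem_range]
        refine ⟨h1 i hi, h5 i ?_⟩
        by_cases hn : i < n
        · exact Finset.mem_union_left _ (Finset.mem_sdiff.2 ⟨Finset.mem_range.2 hn, hA⟩)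
        · exact Finset.mem_union_right _ (Finset.mem_Ico.2 ⟨Nat.le_of_not_lt hn, hi⟩)⟩⟩
  invFun y := ⟨⟨fun i => if h : i ∈ Finset.range (n + p) then y.2.1 i h else 0, y.1.1⟩, by
    obtain ⟨⟨A, hA⟩, g, hg⟩ := y
    rw [Finset.mem_powerset] at hA
    rw [Finset.mem_pi] at hg
    dsimp only
    have key : ∀ i (h : i ∈ Finset.range (n + p)),
        g i h ∈ Finset.range n ∧ (g i h ∈ A ↔ i ∈ A) := by
      intro i h
      have := hg i h
      by_cases hi : i ∈ A
      · simp only [hi, if_true] at this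
        exact ⟨hA this, by simp [this, hi]⟩
      · simp only [hi, if_false, Finset.mem_sdiff] at this
        exact ⟨this.1, by simp [this.2, hi]⟩
    refine ⟨?_, ?_, hA, ?_, ?_⟩
    · intro i hi
      rw [dif_pos (Finset.mem_range.2 hi)]
      exact Finset.mem_range.1 (key i (Finset.mem_range.2 hi)).1
    · intro i hi
      rw [dif_neg (by simpa using Nat.not_lt.2 hi)]
    · intro a ha
      have ha' : a ∈ Finset.range (n + p) :=
        Finset.mem_range.2 (lt_of_lt_of_le (Finset.mem_range.1 (hA ha)) (Nat.le_add_right n p))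
      rw [dif_pos ha']
      exact ((key a ha').2).2 ha
    · intro b hb
      rcases Finset.mem_union.1 hb with hb' | hb'
      · rw [Finset.mem_sdiff] at hb'
        have hb'' : b ∈ Finset.range (n + p) :=
          Finset.mem_range.2 (lt_of_lt_of_le (Finset.mem_range.1 hb'.1) (Nat.le_add_right n p))
        rw [dif_pos hb'']
        exact fun hc => hb'.2 (((key b hb'').2).1 hc)
      · rw [Finset.mem_Ico] at hb'
        have hb'' : b ∈ Finset.range (n + p) := Finset.mem_range.2 hb'.2
        have hbA : b ∉ A := fun hc => Nat.not_lt.2 hb'.1 (Finset.mem_range.1 (hA hc))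
        rw [dif_pos hb'']
        exact fun hc => hbA (((key b hb'').2).1 hc)⟩
  left_inv x := by
    obtain ⟨⟨f, A⟩, h1, h2, h3, h4, h5⟩ := x
    ext i
    · by_cases h : i ∈ Finset.range (n + p)
      · simp [h]
      · simp only [h, dif_neg, not_false_iff]
        exact (h2 i (Nat.not_lt.1 (by simpa using h))).symm
    · simp
  right_inv y := by
    obtain ⟨⟨A, hA⟩, g, hg⟩ := y
    refine Sigma.ext rfl (Subtype.heq_iff_coe_eq (by simp) |>.2 ?_)
    funext i h
    simp [h]

/-- The left-hand side of Kalai's identity counts pairs `(f, A)`, where `f : ℕ → ℕ`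
maps `{0,…,n+p-1}` into `{0,…,n-1}` (and is normalized to `0` on inputs `≥ n+p`),
and `A ⊆ {0,…,n-1}` satisfies `f(A) ⊆ A` and `f(([n] \ A) ∪ {n,…,n+p-1}) ∩ A = ∅`:
their number is `∑_{k=0}^n C(n,k) k^k (n-k)^{n-k+p}`. -/
theorem kalai_lhs_count (n p : ℕ) :
    Nat.card {fA : (ℕ → ℕ) × Finset ℕ //
        (∀ i < n + p, fA.1 i < n) ∧ (∀ i, n + p ≤ i → fA.1 i = 0) ∧
        fA.2 ⊆ Finset.range n ∧
        (∀ a ∈ fA.2, fA.1 a ∈ fA.2) ∧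
        (∀ b ∈ (Finset.range n \ fA.2) ∪ Finset.Ico n (n + p), fA.1 b ∉ fA.2)} =
      ∑ k ∈ Finset.range (n + 1), n.choose k * k ^ k * (n - k) ^ (n - k + p) := by
  classical
  rw [Nat.card_congr (kalaiEquiv n p), Nat.card_eq_fintype_card, Fintype.card_sigma]
  have step1 : ∀ A : ((Finset.range n).powerset : Finset (Finset ℕ)),
      Fintype.card {g // g ∈ (Finset.range (n + p)).pi
        (fun i => if i ∈ A.1 then A.1 else Finset.range n \ A.1)} =
      A.1.card ^ A.1.card * (n - A.1.card) ^ (n - A.1.card + p) := by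
    rintro ⟨A, hA⟩
    rw [Finset.mem_powerset] at hA
    have hA' : A ⊆ Finset.range (n + p) :=
      hA.trans (Finset.range_subset_range.2 (Nat.le_add_right n p))
    rw [Fintype.card_coe, Finset.card_pi]
    have : ∀ i, ((if i ∈ A then A else Finset.range n \ A) : Finset ℕ).card
        = if i ∈ A then A.card else (Finset.range n \ A).card := by
      intro i; split <;> rfl
    simp only [this]
    rw [Finset.prod_ite, Finset.prod_const, Finset.prod_const,
      Finset.filter_mem_eq_inter, Finset.inter_eq_right.2 hA',
      ← Finset.sdiff_eq_filter, Finset.card_sdiff_of_subset hA', Finset.card_range,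
      Finset.card_sdiff_of_subset hA, Finset.card_range]
    have hk : A.card ≤ n := by simpa using Finset.card_le_card hA
    congr 2
    omega
  rw [Finset.sum_congr rfl (fun A _ => step1 A), Finset.sum_coe_sort ((Finset.range n).powerset)
      (fun A => A.card ^ A.card * (n - A.card) ^ (n - A.card + p)),
    Finset.sum_powerset]
  rw [Finset.card_range]
  refine Finset.sum_congr rfl fun k hk => ?_
  rw [Finset.sum_congr rfl (fun t ht =>
    by rw [(Finset.mem_powersetCard.1 ht).2] :
      ∀ t ∈ (Finset.range n).powersetCard k, t.card ^ t.card * (n - t.card) ^ (n - t.card + p)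
        = k ^ k * (n - k) ^ (n - k + p)),
    Finset.sum_const, Finset.card_powersetCard, Finset.card_range, smul_eq_mul, mul_assoc]
end
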